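/- arXiv:1410.7273 — 7 statements merged into one kernel-verified Lean document; each statement's English description precedes it below -/
import Mathlib

section
/- A unicolored triangle cannot be 2-color-blocked: there is no finite colored point set consisting of three non-collinear points of one color together with a blocking set B inside their convex hull using only two other colors, such that the whole set is properly colored with respect to its visibility graph. -/
open scoped Classical

abbrev Pt := ℝ × ℝ

/-- `u` and `v` are mutually visible within `X`: they are distinct and the open
segment between them contains no point of `X`. -/
def Visible (X : Finset Pt) (u v : Pt) : Prop :=
  u ≠ v ∧ ∀ p ∈ X, p ∉ openSegment ℝ u v

/-- A coloring is proper for the visibility graph of `X`: any two distinct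
same-colored points of `X` are blocked by some point of `X` on the open
segment between them. -/
def ProperColoring {α : Type*} (X : Finset Pt) (c : Pt → α) : Prop :=
  ∀ u ∈ X, ∀ v ∈ X, u ≠ v → c u = c v → ∃ p ∈ X, p ∈ openSegment ℝ u v

/-- `X` has at most 3 collinear points. -/
def AtMost3Collinear (X : Finset Pt) : Prop :=
  ∀ S : Finset Pt, S ⊆ X → Collinear ℝ (S : Set Pt) → S.card ≤ 3

/-- A finite set is in (strictly) convex position. -/
def ConvexPos (H : Finset Pt) : Prop :=
  ∀ p ∈ H, p ∉ convexHull ℝ ((H.erase p : Finset Pt) : Set Pt)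

/-! ### Auxiliary machinery for `stmt2` -/

/-- Planar cross product (twice the signed area). -/
def det2 (p q : Pt) : ℝ := p.1 * q.2 - p.2 * q.1

lemma det2_self (p : Pt) : det2 p p = 0 := by
  simp [det2]; ring

lemma det2_comb_left (a b : ℝ) (p q r : Pt) :
    det2 (a • p + b • q) r = a * det2 p r + b * det2 q r := by
  obtain ⟨p1, p2⟩ := p; obtain ⟨q1, q2⟩ := q; obtain ⟨r1, r2⟩ := r
  simp [det2, Prod.smul_mk]; ring

lemma det2_comb_right (a b : ℝ) (p q r : Pt) :
    det2 p (a • q + b • r) = a * det2 p q + b * det2 p r := by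
  obtain ⟨p1, p2⟩ := p; obtain ⟨q1, q2⟩ := q; obtain ⟨r1, r2⟩ := r
  simp [det2, Prod.smul_mk]; ring

lemma det2_smul_left (s : ℝ) (p q : Pt) : det2 (s • p) q = s * det2 p q := by
  obtain ⟨p1, p2⟩ := p; obtain ⟨q1, q2⟩ := q
  simp [det2, Prod.smul_mk]; ring

lemma det2_smul_right (s : ℝ) (p q : Pt) : det2 p (s • q) = s * det2 p q := by
  obtain ⟨p1, p2⟩ := p; obtain ⟨q1, q2⟩ := q
  simp [det2, Prod.smul_mk]; ring

lemma det2_sub_swap (a b c : Pt) : det2 (a - b) (c - b) = - det2 (b - a) (c - a) := by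
  obtain ⟨a1, a2⟩ := a; obtain ⟨b1, b2⟩ := b; obtain ⟨c1, c2⟩ := c
  simp [det2]; ring

lemma det2_cycle (a b c : Pt) : det2 (b - a) (c - a) = det2 (a - c) (b - c) := by
  obtain ⟨a1, a2⟩ := a; obtain ⟨b1, b2⟩ := b; obtain ⟨c1, c2⟩ := c
  simp [det2]; ring

lemma det2_eq_zero_dep {p q : Pt} (h : det2 p q = 0) (hp : p ≠ 0) : ∃ r : ℝ, q = r • p := by
  obtain ⟨p1, p2⟩ := p; obtain ⟨q1, q2⟩ := q
  simp only [det2] at h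
  by_cases h1 : p1 = 0
  · have h2 : p2 ≠ 0 := by
      intro h2; exact hp (by simp [h1, h2, Prod.ext_iff])
    have hq1 : q1 = 0 := by
      have hh : p2 * q1 = 0 := by rw [h1] at h; linarith
      rcases mul_eq_zero.1 hh with h' | h'
      · exact absurd h' h2
      · exact h'
    refine ⟨q2 / p2, ?_⟩
    have hsm : (q2 / p2) • ((p1, p2) : Pt) = (q2 / p2 * p1, q2 / p2 * p2) := by
      simp [Prod.smul_mk]
    rw [hsm, Prod.mk.injEq]
    constructor
    · rw [h1, hq1]; ring
    · field_simp
  · refine ⟨q1 / p1, ?_⟩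
    have hsm : (q1 / p1) • ((p1, p2) : Pt) = (q1 / p1 * p1, q1 / p1 * p2) := by
      simp [Prod.smul_mk]
    rw [hsm, Prod.mk.injEq]
    constructor
    · field_simp
    · field_simp
      nlinarith [h]

lemma collinear_of_det2 {t1 t2 t3 : Pt} (h : det2 (t2 - t1) (t3 - t1) = 0) :
    Collinear ℝ ({t1, t2, t3} : Set Pt) := by
  by_cases h21 : t2 - t1 = 0
  · have ht : t2 = t1 := by rwa [sub_eq_zero] at h21
    have hset : ({t1, t2, t3} : Set Pt) = {t1, t3} := by
      rw [ht]; ext x; simp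
    rw [hset]; exact collinear_pair ℝ t1 t3
  · obtain ⟨r, hr⟩ := det2_eq_zero_dep h h21
    rw [collinear_iff_of_mem (show t1 ∈ ({t1, t2, t3} : Set Pt) by simp)]
    refine ⟨t2 - t1, ?_⟩
    intro p hp
    simp only [Set.mem_insert_iff, Set.mem_singleton_iff] at hp
    rcases hp with rfl | rfl | rfl
    · exact ⟨0, by simp⟩
    · exact ⟨1, by simp [vadd_eq_add]⟩
    · exact ⟨r, by rw [← hr]; simp [vadd_eq_add]⟩

/-- Barycentric-style representation for membership in the hull of three points. -/
lemma mem_tri_rep {t1 t2 t3 u : Pt} (hu : u ∈ convexHull ℝ ({t1, t2, t3} : Set Pt)) :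
    ∃ α β γ : ℝ, 0 ≤ α ∧ 0 ≤ β ∧ 0 ≤ γ ∧ α + β + γ = 1 ∧ u = α • t1 + β • t2 + γ • t3 := by
  rw [show ({t1, t2, t3} : Set Pt) = insert t1 {t2, t3} from rfl,
    convexHull_insert ⟨t2, by simp⟩, convexHull_pair] at hu
  rw [mem_convexJoin] at hu
  obtain ⟨x, hx, y, hy, hseg⟩ := hu
  rw [Set.mem_singleton_iff] at hx
  subst hx
  obtain ⟨p, q, hp, hq, hpq, rfl⟩ := hy
  obtain ⟨m, n, hm, hn, hmn, rfl⟩ := hseg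
  exact ⟨m, n * p, n * q, hm, mul_nonneg hn hp, mul_nonneg hn hq,
    by linear_combination hmn + n * hpq, by module⟩

/-- If a vertex of a nondegenerate triangle lies on the open segment between two points
of the (closed) triangle, then both points are that vertex. -/
lemma coord_extreme {t1 t2 t3 u v : Pt} (hD : det2 (t2 - t1) (t3 - t1) ≠ 0)
    (hu : u ∈ convexHull ℝ ({t1, t2, t3} : Set Pt))
    (hv : v ∈ convexHull ℝ ({t1, t2, t3} : Set Pt))
    (hz : t1 ∈ openSegment ℝ u v) : u = t1 := by
  obtain ⟨α₁, β₁, γ₁, hα₁, hβ₁, hγ₁, hs₁, hu₁⟩ := mem_tri_rep hu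
  obtain ⟨α₂, β₂, γ₂, hα₂, hβ₂, hγ₂, hs₂, hu₂⟩ := mem_tri_rep hv
  obtain ⟨e, f, he, hf, hef, hc⟩ := hz
  have hD1 : det2 (t1 - t2) (t3 - t2) ≠ 0 := by
    rw [det2_sub_swap]
    exact neg_ne_zero.2 hD
  have hu2 : u - t2 = α₁ • (t1 - t2) + γ₁ • (t3 - t2) := by
    have hb : β₁ = 1 - α₁ - γ₁ := by linarith
    rw [hu₁, hb]; module
  have hv2 : v - t2 = α₂ • (t1 - t2) + γ₂ • (t3 - t2) := by
    have hb : β₂ = 1 - α₂ - γ₂ := by linarith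
    rw [hu₂, hb]; module
  have hFu : det2 (u - t2) (t3 - t2) = α₁ * det2 (t1 - t2) (t3 - t2) := by
    rw [hu2, det2_comb_left, det2_self]; ring
  have hFv : det2 (v - t2) (t3 - t2) = α₂ * det2 (t1 - t2) (t3 - t2) := by
    rw [hv2, det2_comb_left, det2_self]; ring
  have hline : t1 - t2 = e • (u - t2) + f • (v - t2) := by
    have he' : e = 1 - f := by linarith
    rw [← hc, he']; module
  have hkey : det2 (t1 - t2) (t3 - t2)
      = (e * α₁ + f * α₂) * det2 (t1 - t2) (t3 - t2) := by
    conv_lhs => rw [hline]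
    rw [det2_comb_left, hFu, hFv]; ring
  have h1 : e * α₁ + f * α₂ = 1 := by
    have h0 : (e * α₁ + f * α₂ - 1) * det2 (t1 - t2) (t3 - t2) = 0 := by
      linear_combination -hkey
    rcases mul_eq_zero.1 h0 with h' | h'
    · linarith
    · exact absurd h' hD1
  have hαle : α₁ ≤ 1 := by linarith
  have hαle' : α₂ ≤ 1 := by linarith
  have e1 : e * (1 - α₁) + f * (1 - α₂) = 0 := by linear_combination hef - h1
  have t1nn : 0 ≤ e * (1 - α₁) := mul_nonneg he.le (by linarith)
  have t2nn : 0 ≤ f * (1 - α₂) := mul_nonneg hf.le (by linarith)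
  have hz1 : e * (1 - α₁) = 0 := by linarith
  have hA1 : α₁ = 1 := by
    rcases mul_eq_zero.1 hz1 with h' | h'
    · exact absurd h' (ne_of_gt he)
    · linarith
  have hγ0 : γ₁ = 0 := by linarith
  have hβ0 : β₁ = 0 := by linarith
  rw [hu₁, hA1, hγ0, hβ0]; module

set_option maxHeartbeats 1000000 in
theorem stmt2 :
    ¬ ∃ (t1 t2 t3 : Pt) (B : Finset Pt) (c : Pt → ℕ),
      ¬ Collinear ℝ ({t1, t2, t3} : Set Pt) ∧
      c t1 = c t2 ∧ c t2 = c t3 ∧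
      (↑B ⊆ convexHull ℝ ({t1, t2, t3} : Set Pt) \ {t1, t2, t3}) ∧
      (∃ k1 k2 : ℕ, k1 ≠ c t1 ∧ k2 ≠ c t1 ∧ ∀ b ∈ B, c b = k1 ∨ c b = k2) ∧
      ProperColoring (({t1, t2, t3} : Finset Pt) ∪ B) c := by
  rintro ⟨t1, t2, t3, B, c, hNC, h12, h23, hB, ⟨k1, k2, -, -, hBc⟩, hPC⟩
  have hD : det2 (t2 - t1) (t3 - t1) ≠ 0 := fun h => hNC (collinear_of_det2 h)
  -- distinctness of the vertices
  have ht12 : t1 ≠ t2 := by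
    intro h; exact hD (by simp [h, det2])
  have ht13 : t1 ≠ t3 := by
    intro h; exact hD (by simp [h, det2])
  have ht23 : t2 ≠ t3 := by
    intro h; apply hD; rw [h]; exact det2_self _
  -- memberships
  have mem1 : t1 ∈ ({t1, t2, t3} : Finset Pt) ∪ B := by simp
  have mem2 : t2 ∈ ({t1, t2, t3} : Finset Pt) ∪ B := by simp
  have mem3 : t3 ∈ ({t1, t2, t3} : Finset Pt) ∪ B := by simp
  have memB : ∀ {x : Pt}, x ∈ B → x ∈ ({t1, t2, t3} : Finset Pt) ∪ B :=
    fun hx => Finset.mem_union_right _ hx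
  have hBdata : ∀ {x : Pt}, x ∈ B →
      x ∈ convexHull ℝ ({t1, t2, t3} : Set Pt) ∧ x ∉ ({t1, t2, t3} : Set Pt) := by
    intro x hx
    have := hB (by exact_mod_cast hx)
    exact ⟨this.1, this.2⟩
  -- a blocker of a B-B pair is in B
  have hblockB : ∀ {u v z : Pt}, u ∈ B → v ∈ B → z ∈ ({t1, t2, t3} : Finset Pt) ∪ B →
      z ∈ openSegment ℝ u v → z ∈ B := by
    intro u v z hu hv hzX hzseg
    rcases Finset.mem_union.1 hzX with hzT | hzB
    · exfalso
      have hu' := hBdata hu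
      have hv' := hBdata hv
      have hz3 : z = t1 ∨ z = t2 ∨ z = t3 := by
        simpa using hzT
      rcases hz3 with h' | h' | h'
      · rw [h'] at hzseg
        have := coord_extreme hD hu'.1 hv'.1 hzseg
        exact hu'.2 (by rw [this]; simp)
      · rw [h'] at hzseg
        have hD' : det2 (t1 - t2) (t3 - t2) ≠ 0 := by
          rw [det2_sub_swap]; exact neg_ne_zero.2 hD
        have hset : ({t1, t2, t3} : Set Pt) = ({t2, t1, t3} : Set Pt) := by
          ext x; simp; tauto
        have := coord_extreme hD' (hset ▸ hu'.1) (hset ▸ hv'.1) hzseg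
        exact hu'.2 (by rw [this]; simp)
      · rw [h'] at hzseg
        have hD' : det2 (t1 - t3) (t2 - t3) ≠ 0 := by
          rw [← det2_cycle]; exact hD
        have hset : ({t1, t2, t3} : Set Pt) = ({t3, t1, t2} : Set Pt) := by
          ext x; simp; tauto
        have := coord_extreme hD' (hset ▸ hu'.1) (hset ▸ hv'.1) hzseg
        exact hu'.2 (by rw [this]; simp)
    · exact hzB
  -- the three edge blockers
  have h13 : c t1 = c t3 := h12.trans h23
  obtain ⟨b12, hb12X, hb12s⟩ := hPC t1 mem1 t2 mem2 ht12 h12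
  obtain ⟨b13, hb13X, hb13s⟩ := hPC t1 mem1 t3 mem3 ht13 h13
  obtain ⟨b23, hb23X, hb23s⟩ := hPC t2 mem2 t3 mem3 ht23 h23
  obtain ⟨e1, f1, he1, hf1, hef1, hc1⟩ := hb12s
  obtain ⟨e2, f2, he2, hf2, hef2, hc2⟩ := hb13s
  obtain ⟨e3, f3, he3, hf3, hef3, hc3⟩ := hb23s
  -- they are in B
  have hb12B : b12 ∈ B := by
    rcases Finset.mem_union.1 hb12X with hT | hB'
    · exfalso
      have h3 : b12 = t1 ∨ b12 = t2 ∨ b12 = t3 := by simpa using hT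
      rcases h3 with h' | h' | h'
      · apply ht12
        have hz : f1 • (t2 - t1) = 0 := by
          have : f1 • (t2 - t1) = (e1 • t1 + f1 • t2) - t1 := by
            have he' : e1 = 1 - f1 := by linarith
            rw [he']; module
          rw [this, hc1, h', sub_self]
        rcases smul_eq_zero.1 hz with h'' | h''
        · exact absurd h'' (ne_of_gt hf1)
        · exact (sub_eq_zero.1 h'').symm
      · apply ht12
        have hz : e1 • (t1 - t2) = 0 := by
          have : e1 • (t1 - t2) = (e1 • t1 + f1 • t2) - t2 := by
            have he' : f1 = 1 - e1 := by linarith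
            rw [he']; module
          rw [this, hc1, h', sub_self]
        rcases smul_eq_zero.1 hz with h'' | h''
        · exact absurd h'' (ne_of_gt he1)
        · exact sub_eq_zero.1 h''
      · apply hD
        have h31 : t3 - t1 = f1 • (t2 - t1) := by
          rw [← h', ← hc1]
          have he' : e1 = 1 - f1 := by linarith
          rw [he']; module
        rw [h31, det2_smul_right, det2_self, mul_zero]
    · exact hB'
  have hb13B : b13 ∈ B := by
    rcases Finset.mem_union.1 hb13X with hT | hB'
    · exfalso
      have h3 : b13 = t1 ∨ b13 = t2 ∨ b13 = t3 := by simpa using hT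
      rcases h3 with h' | h' | h'
      · apply ht13
        have hz : f2 • (t3 - t1) = 0 := by
          have : f2 • (t3 - t1) = (e2 • t1 + f2 • t3) - t1 := by
            have he' : e2 = 1 - f2 := by linarith
            rw [he']; module
          rw [this, hc2, h', sub_self]
        rcases smul_eq_zero.1 hz with h'' | h''
        · exact absurd h'' (ne_of_gt hf2)
        · exact (sub_eq_zero.1 h'').symm
      · apply hD
        have h21 : t2 - t1 = f2 • (t3 - t1) := by
          rw [← h', ← hc2]
          have he' : e2 = 1 - f2 := by linarith
          rw [he']; module
        rw [h21, det2_smul_left, det2_self, mul_zero]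
      · apply ht13
        have hz : e2 • (t1 - t3) = 0 := by
          have : e2 • (t1 - t3) = (e2 • t1 + f2 • t3) - t3 := by
            have he' : f2 = 1 - e2 := by linarith
            rw [he']; module
          rw [this, hc2, h', sub_self]
        rcases smul_eq_zero.1 hz with h'' | h''
        · exact absurd h'' (ne_of_gt he2)
        · exact sub_eq_zero.1 h''
    · exact hB'
  have hb23B : b23 ∈ B := by
    rcases Finset.mem_union.1 hb23X with hT | hB'
    · exfalso
      have h3 : b23 = t1 ∨ b23 = t2 ∨ b23 = t3 := by simpa using hT
      rcases h3 with h' | h' | h'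
      · apply hD
        have hx' : e3 • (t2 - t1) + f3 • (t3 - t1) = 0 := by
          have hstep : e3 • (t2 - t1) + f3 • (t3 - t1) = (e3 • t2 + f3 • t3) - t1 := by
            have he' : e3 = 1 - f3 := by linarith
            rw [he']; module
          rw [hstep, hc3, h', sub_self]
        have hmul : e3 • (t2 - t1) = (-f3) • (t3 - t1) := by
          have hneg : e3 • (t2 - t1) = -(f3 • (t3 - t1)) := by
            rw [eq_neg_iff_add_eq_zero]; exact hx'
          rw [hneg, neg_smul]
        have h21 : t2 - t1 = (-(f3 / e3)) • (t3 - t1) := by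
          calc t2 - t1 = (e3⁻¹ * e3) • (t2 - t1) := by
                rw [inv_mul_cancel₀ (ne_of_gt he3), one_smul]
            _ = e3⁻¹ • (e3 • (t2 - t1)) := by rw [mul_smul]
            _ = e3⁻¹ • ((-f3) • (t3 - t1)) := by rw [hmul]
            _ = (-(f3 / e3)) • (t3 - t1) := by
                rw [← mul_smul]; congr 1; field_simp
        rw [h21, det2_smul_left, det2_self, mul_zero]
      · apply ht23
        have hz : f3 • (t3 - t2) = 0 := by
          have : f3 • (t3 - t2) = (e3 • t2 + f3 • t3) - t2 := by
            have he' : e3 = 1 - f3 := by linarith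
            rw [he']; module
          rw [this, hc3, h', sub_self]
        rcases smul_eq_zero.1 hz with h'' | h''
        · exact absurd h'' (ne_of_gt hf3)
        · exact (sub_eq_zero.1 h'').symm
      · apply ht23
        have hz : e3 • (t2 - t3) = 0 := by
          have hstep : e3 • (t2 - t3) = (e3 • t2 + f3 • t3) - t3 := by
            have he' : f3 = 1 - e3 := by linarith
            rw [he']; module
          rw [hstep, hc3, h', sub_self]
        rcases smul_eq_zero.1 hz with h'' | h''
        · exact absurd h'' (ne_of_gt he3)
        · exact sub_eq_zero.1 h''
    · exact hB'
  -- non-collinearity of the three edge blockers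
  have hA : b13 - b12 = (-f1) • (t2 - t1) + f2 • (t3 - t1) := by
    rw [← hc1, ← hc2]
    have h1' : e1 = 1 - f1 := by linarith
    have h2' : e2 = 1 - f2 := by linarith
    rw [h1', h2']; module
  have hBv : b23 - b12 = (1 - f3 - f1) • (t2 - t1) + f3 • (t3 - t1) := by
    rw [← hc1, ← hc3]
    have h1' : e1 = 1 - f1 := by linarith
    have h3' : e3 = 1 - f3 := by linarith
    rw [h1', h3']
    module
  have hdetb : det2 (b13 - b12) (b23 - b12)
      = -(((1 - f2) * f1 * f3) + f2 * (1 - f1) * (1 - f3)) * det2 (t2 - t1) (t3 - t1) := by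
    rw [hA, hBv, det2_comb_left, det2_comb_right, det2_comb_right, det2_self,
      det2_self]
    have hsw : det2 (t3 - t1) (t2 - t1) = - det2 (t2 - t1) (t3 - t1) := by
      obtain ⟨x1, y1⟩ := t1; obtain ⟨x2, y2⟩ := t2; obtain ⟨x3, y3⟩ := t3
      simp [det2]; ring
    rw [hsw]
    ring
  have hf1lt : f1 < 1 := by linarith
  have hf2lt : f2 < 1 := by linarith
  have hf3lt : f3 < 1 := by linarith
  have hbpos : 0 < ((1 - f2) * f1 * f3) + f2 * (1 - f1) * (1 - f3) := by
    have hh1 : 0 < (1 - f2) * f1 * f3 :=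
      mul_pos (mul_pos (by linarith) hf1) hf3
    have hh2 : 0 < f2 * (1 - f1) * (1 - f3) :=
      mul_pos (mul_pos hf2 (by linarith)) (by linarith)
    linarith
  have hdetb0 : det2 (b13 - b12) (b23 - b12) ≠ 0 := by
    rw [hdetb]
    exact mul_ne_zero (neg_ne_zero.2 (ne_of_gt hbpos)) hD
  -- minimal-area noncollinear triple of B
  classical
  set S : Finset ((Pt × Pt) × Pt) :=
    ((B ×ˢ B) ×ˢ B).filter (fun q => det2 (q.1.2 - q.1.1) (q.2 - q.1.1) ≠ 0) with hS
  have hSne : S.Nonempty := by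
    refine ⟨((b12, b13), b23), ?_⟩
    rw [hS, Finset.mem_filter]
    constructor
    · rw [Finset.mem_product]
      exact ⟨by rw [Finset.mem_product]; exact ⟨hb12B, hb13B⟩, hb23B⟩
    · exact hdetb0
  obtain ⟨q0, hq0S, hmin⟩ :=
    Finset.exists_min_image S (fun q => |det2 (q.1.2 - q.1.1) (q.2 - q.1.1)|) hSne
  obtain ⟨⟨u, v⟩, w⟩ := q0
  rw [hS, Finset.mem_filter, Finset.mem_product] at hq0S
  obtain ⟨⟨huv', hwB⟩, hD0⟩ := hq0S
  rw [Finset.mem_product] at huv'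
  obtain ⟨huB, hvB⟩ := huv'
  simp only at hD0 hmin
  have habs : 0 < |det2 (v - u) (w - u)| := abs_pos.2 hD0
  -- distinctness
  have huvne : u ≠ v := by
    intro h
    apply hD0
    rw [h, sub_self]
    simp [det2]
  have huwne : u ≠ w := by
    intro h
    apply hD0
    rw [h, sub_self]
    simp [det2]
  have hvwne : v ≠ w := by
    intro h
    apply hD0
    rw [h]
    exact det2_self _
  -- same-colored pairs among u,v,w are impossible by minimality
  have shrink : ∀ z : (Pt × Pt) × Pt, z ∈ S →
      |det2 (z.1.2 - z.1.1) (z.2 - z.1.1)| < |det2 (v - u) (w - u)| → False := by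
    intro z hzS hlt
    have := hmin z hzS
    linarith
  have hcuv : c u ≠ c v := by
    intro hcc
    obtain ⟨z, hzX, hzs⟩ := hPC u (memB huB) v (memB hvB) huvne hcc
    have hzB : z ∈ B := hblockB huB hvB hzX hzs
    obtain ⟨e, f, he, hf, hef, hc⟩ := hzs
    have hzu : z - u = f • (v - u) := by
      rw [← hc]
      have he' : e = 1 - f := by linarith
      rw [he']; module
    have hd' : det2 (z - u) (w - u) = f * det2 (v - u) (w - u) := by
      rw [hzu, det2_smul_left]
    refine shrink ((u, z), w) ?_ ?_
    · rw [hS, Finset.mem_filter]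
      refine ⟨?_, ?_⟩
      · rw [Finset.mem_product]
        exact ⟨by rw [Finset.mem_product]; exact ⟨huB, hzB⟩, hwB⟩
      · simp only
        rw [hd']
        exact mul_ne_zero (ne_of_gt hf) hD0
    · simp only
      rw [hd', abs_mul, abs_of_pos hf]
      have hflt : f < 1 := by linarith
      calc f * |det2 (v - u) (w - u)| < 1 * |det2 (v - u) (w - u)| :=
            mul_lt_mul_of_pos_right hflt habs
        _ = |det2 (v - u) (w - u)| := one_mul _
  have hcuw : c u ≠ c w := by
    intro hcc
    obtain ⟨z, hzX, hzs⟩ := hPC u (memB huB) w (memB hwB) huwne hcc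
    have hzB : z ∈ B := hblockB huB hwB hzX hzs
    obtain ⟨e, f, he, hf, hef, hc⟩ := hzs
    have hzu : z - u = f • (w - u) := by
      rw [← hc]
      have he' : e = 1 - f := by linarith
      rw [he']; module
    have hd' : det2 (v - u) (z - u) = f * det2 (v - u) (w - u) := by
      rw [hzu, det2_smul_right]
    refine shrink ((u, v), z) ?_ ?_
    · rw [hS, Finset.mem_filter]
      refine ⟨?_, ?_⟩
      · rw [Finset.mem_product]
        exact ⟨by rw [Finset.mem_product]; exact ⟨huB, hvB⟩, hzB⟩
      · simp only
        rw [hd']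
        exact mul_ne_zero (ne_of_gt hf) hD0
    · simp only
      rw [hd', abs_mul, abs_of_pos hf]
      have hflt : f < 1 := by linarith
      calc f * |det2 (v - u) (w - u)| < 1 * |det2 (v - u) (w - u)| :=
            mul_lt_mul_of_pos_right hflt habs
        _ = |det2 (v - u) (w - u)| := one_mul _
  have hcvw : c v ≠ c w := by
    intro hcc
    obtain ⟨z, hzX, hzs⟩ := hPC v (memB hvB) w (memB hwB) hvwne hcc
    have hzB : z ∈ B := hblockB hvB hwB hzX hzs
    obtain ⟨e, f, he, hf, hef, hc⟩ := hzs
    have hzu : z - u = e • (v - u) + f • (w - u) := by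
      rw [← hc]
      have he' : e = 1 - f := by linarith
      rw [he']; module
    have hd' : det2 (v - u) (z - u) = f * det2 (v - u) (w - u) := by
      rw [hzu, det2_comb_right, det2_self]; ring
    refine shrink ((u, v), z) ?_ ?_
    · rw [hS, Finset.mem_filter]
      refine ⟨?_, ?_⟩
      · rw [Finset.mem_product]
        exact ⟨by rw [Finset.mem_product]; exact ⟨huB, hvB⟩, hzB⟩
      · simp only
        rw [hd']
        exact mul_ne_zero (ne_of_gt hf) hD0
    · simp only
      rw [hd', abs_mul, abs_of_pos hf]
      have hflt : f < 1 := by linarith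
      calc f * |det2 (v - u) (w - u)| < 1 * |det2 (v - u) (w - u)| :=
            mul_lt_mul_of_pos_right hflt habs
        _ = |det2 (v - u) (w - u)| := one_mul _
  -- pigeonhole on two colors
  rcases hBc u huB with hu1 | hu1 <;> rcases hBc v hvB with hv1 | hv1 <;>
    rcases hBc w hwB with hw1 | hw1 <;>
    first
      | exact hcuv (hu1.trans hv1.symm)
      | exact hcuw (hu1.trans hw1.symm)
      | exact hcvw (hv1.trans hw1.symm)
end

section
/- Any finite planar point set with at most 3 collinear points whose visibility graph is properly 3-colorable has at most 6 points. -/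
open scoped Classical

def det3 (a b c : Pt) : ℝ := (b.1-a.1)*(c.2-a.2) - (b.2-a.2)*(c.1-a.1)

lemma det3_xyx (x y : Pt) : det3 x y x = 0 := by simp only [det3]; ring
lemma det3_xyy (x y : Pt) : det3 x y y = 0 := by simp only [det3]; ring
lemma det3_xxy (x y : Pt) : det3 x x y = 0 := by simp only [det3]; ring
lemma det3_cyc (a b c : Pt) : det3 b c a = det3 a b c := by simp only [det3]; ring

lemma det3_aff1 {k l : ℝ} (h : k + l = 1) (u v y z : Pt) :
    det3 (k•u + l•v) y z = k * det3 u y z + l * det3 v y z := by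
  have : l = 1 - k := by linarith
  subst this
  simp [det3, Prod.fst_add, Prod.snd_add, Prod.smul_fst, Prod.smul_snd, smul_eq_mul]
  ring

lemma det3_aff2 {k l : ℝ} (h : k + l = 1) (u v x z : Pt) :
    det3 x (k•u + l•v) z = k * det3 x u z + l * det3 x v z := by
  have : l = 1 - k := by linarith
  subst this
  simp [det3, Prod.fst_add, Prod.snd_add, Prod.smul_fst, Prod.smul_snd, smul_eq_mul]
  ring

lemma det3_aff3 {k l : ℝ} (h : k + l = 1) (u v x y : Pt) :
    det3 x y (k•u + l•v) = k * det3 x y u + l * det3 x y v := by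
  have : l = 1 - k := by linarith
  subst this
  simp [det3, Prod.fst_add, Prod.snd_add, Prod.smul_fst, Prod.smul_snd, smul_eq_mul]
  ring

lemma seg_coeff {u v z : Pt} (h : z ∈ openSegment ℝ u v) :
    ∃ k l : ℝ, 0 < k ∧ 0 < l ∧ k + l = 1 ∧ z = k•u + l•v := by
  obtain ⟨k, l, hk, hl, hkl, hz⟩ := h
  exact ⟨k, l, hk, hl, hkl, hz.symm⟩

lemma param_of_det {x y z : Pt} (hxy : x ≠ y) (h : det3 x y z = 0) :
    ∃ t : ℝ, z = (1-t)•x + t•y := by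
  have hne : x.1 ≠ y.1 ∨ x.2 ≠ y.2 := by
    by_contra hc
    push_neg at hc
    exact hxy (Prod.ext hc.1 hc.2)
  simp only [det3] at h
  rcases hne with h1 | h2
  · refine ⟨(z.1 - x.1)/(y.1 - x.1), ?_⟩
    have hd : y.1 - x.1 ≠ 0 := fun hq => h1 (by linarith)
    apply Prod.ext <;>
      simp [Prod.fst_add, Prod.snd_add, Prod.smul_fst, Prod.smul_snd, smul_eq_mul] <;>
      field_simp <;> ring_nf <;> nlinarith [h]
  · refine ⟨(z.2 - x.2)/(y.2 - x.2), ?_⟩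
    have hd : y.2 - x.2 ≠ 0 := fun hq => h2 (by linarith)
    apply Prod.ext <;>
      simp [Prod.fst_add, Prod.snd_add, Prod.smul_fst, Prod.smul_snd, smul_eq_mul] <;>
      field_simp <;> ring_nf <;> nlinarith [h]

lemma param_inj {x y : Pt} (hxy : x ≠ y) {μ ν : ℝ}
    (h : (1-μ)•x + μ•y = (1-ν)•x + ν•y) : μ = ν := by
  have hne : x.1 ≠ y.1 ∨ x.2 ≠ y.2 := by
    by_contra hc; push_neg at hc; exact hxy (Prod.ext hc.1 hc.2)
  have h1 := congrArg Prod.fst h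
  have h2 := congrArg Prod.snd h
  simp [Prod.fst_add, Prod.snd_add, Prod.smul_fst, Prod.smul_snd, smul_eq_mul] at h1 h2
  rcases hne with h' | h'
  · by_contra hmn
    apply h'
    have : (μ - ν) * (y.1 - x.1) = 0 := by nlinarith [h1]
    rcases mul_eq_zero.mp this with hh | hh
    · exact absurd (by linarith) hmn
    · linarith
  · by_contra hmn
    apply h'
    have : (μ - ν) * (y.2 - x.2) = 0 := by nlinarith [h2]
    rcases mul_eq_zero.mp this with hh | hh
    · exact absurd (by linarith) hmn
    · linarith

lemma coll_of_det {x y : Pt} (hxy : x ≠ y) (s : Set Pt)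
    (h : ∀ w ∈ s, det3 x y w = 0) : Collinear ℝ s := by
  rw [collinear_iff_exists_forall_eq_smul_vadd]
  refine ⟨x, y - x, fun p hp => ?_⟩
  obtain ⟨t, ht⟩ := param_of_det hxy (h p hp)
  refine ⟨t, ?_⟩
  rw [ht]
  simp [vadd_eq_add, smul_sub, sub_smul, one_smul]
  abel


lemma four_collinear {X : Finset Pt} (h3 : AtMost3Collinear X) {x y z w : Pt}
    (hx : x ∈ X) (hy : y ∈ X) (hz : z ∈ X) (hw : w ∈ X)
    (hxy : x ≠ y) (hxz : x ≠ z) (hxw : x ≠ w) (hyz : y ≠ z) (hyw : y ≠ w) (hzw : z ≠ w)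
    (dz : det3 x y z = 0) (dw : det3 x y w = 0) : False := by
  have hsub : ({x, y, z, w} : Finset Pt) ⊆ X := by
    intro u hu
    simp only [Finset.mem_insert, Finset.mem_singleton] at hu
    rcases hu with rfl | rfl | rfl | rfl <;> assumption
  have hcoll : Collinear ℝ (({x, y, z, w} : Finset Pt) : Set Pt) := by
    apply coll_of_det hxy
    intro u hu
    simp only [Finset.coe_insert, Finset.coe_singleton, Set.mem_insert_iff,
      Set.mem_singleton_iff] at hu
    rcases hu with rfl | rfl | rfl | rfl
    · exact det3_xyx _ _
    · exact det3_xyy _ _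
    · exact dz
    · exact dw
  have hcard : ({x, y, z, w} : Finset Pt).card = 4 := by
    rw [Finset.card_insert_of_notMem (by simp [hxy, hxz, hxw]),
        Finset.card_insert_of_notMem (by simp [hyz, hyw]),
        Finset.card_insert_of_notMem (by simp [hzw]),
        Finset.card_singleton]
  have := h3 _ hsub hcoll
  omega

lemma noColl3 {X : Finset Pt} {cc : Pt → Fin 3} (h3 : AtMost3Collinear X)
    (hPC : ProperColoring X cc) :
    ∀ x ∈ X, ∀ y ∈ X, ∀ z ∈ X, x ≠ y → x ≠ z → y ≠ z →
      cc x = cc y → cc y = cc z → det3 x y z = 0 → False := by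
  intro x hx y hy z hz hxy hxz hyz cxy cyz hdet
  obtain ⟨t, ht⟩ := param_of_det hxy hdet
  have ht0 : t ≠ 0 := by
    rintro rfl; simp at ht; exact hxz ht.symm
  have ht1 : t ≠ 1 := by
    rintro rfl; simp at ht; exact hyz ht.symm
  by_cases hin : 0 < t ∧ t < 1
  · -- z between x and y; use pair (x, z), excluded point y (param 1)
    obtain ⟨w, hwX, hw⟩ := hPC x hx z hz hxz (cxy.trans cyz)
    obtain ⟨m1, m2, hm1, hm2, hm12, hwe⟩ := seg_coeff hw
    have hm1' : m1 = 1 - m2 := by linarith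
    have hwp : w = (1 - m2*t)•x + (m2*t)•y := by
      rw [hwe, ht, hm1']
      module
    -- params: x ↦ 0, y ↦ 1, z ↦ t, w ↦ m2*t ∈ (0, t)
    have px : x = (1-(0:ℝ))•x + (0:ℝ)•y := by simp
    have py : y = (1-(1:ℝ))•x + (1:ℝ)•y := by simp
    have hμ0 : 0 < m2*t := mul_pos hm2 hin.1
    have hμt : m2*t < t := by nlinarith
    have hwx : x ≠ w := fun h => by
      have := param_inj hxy (px.symm.trans (h.symm ▸ hwp)); nlinarith
    have hwy : y ≠ w := fun h => by
      have := param_inj hxy (py.symm.trans (h.symm ▸ hwp)); nlinarith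
    have hwz : z ≠ w := fun h => by
      have := param_inj hxy ((ht.symm ▸ (rfl : z = z) : z = (1-t)•x + t•y).symm.trans (h.symm ▸ hwp))
      nlinarith
    have dw : det3 x y w = 0 := by
      rw [hwp, det3_aff3 (by ring) x y x y, det3_xyx, det3_xyy]; ring
    exact four_collinear h3 hx hy hz hwX hxy hxz hwx hyz hwy hwz hdet dw
  · -- t < 0 or t > 1: use pair (x, y), excluded z
    obtain ⟨w, hwX, hw⟩ := hPC x hx y hy hxy cxy
    obtain ⟨m1, m2, hm1, hm2, hm12, hwe⟩ := seg_coeff hw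
    have hm1' : m1 = 1 - m2 := by linarith
    have hwp : w = (1 - m2)•x + m2•y := by rw [hwe, hm1']
    have hout : t < 0 ∨ 1 < t := by
      rcases lt_or_ge t 0 with h | h
      · exact Or.inl h
      · right
        rcases lt_or_ge t 1 with h' | h'
        · exact absurd ⟨lt_of_le_of_ne h (Ne.symm ht0), h'⟩ hin
        · exact lt_of_le_of_ne h' (Ne.symm ht1)
    have px : x = (1-(0:ℝ))•x + (0:ℝ)•y := by simp
    have py : y = (1-(1:ℝ))•x + (1:ℝ)•y := by simp
    have hm2' : m2 < 1 := by linarith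
    have hwx : x ≠ w := fun h => by
      have := param_inj hxy (px.symm.trans (h.symm ▸ hwp)); nlinarith
    have hwy : y ≠ w := fun h => by
      have := param_inj hxy (py.symm.trans (h.symm ▸ hwp)); nlinarith
    have hwz : z ≠ w := fun h => by
      have := param_inj hxy ((ht.symm ▸ (rfl : z = z) : z = (1-t)•x + t•y).symm.trans (h.symm ▸ hwp))
      rcases hout with h' | h' <;> nlinarith
    have dw : det3 x y w = 0 := by
      rw [hwp, det3_aff3 (by ring) x y x y, det3_xyx, det3_xyy]; ring
    exact four_collinear h3 hx hy hz hwX hxy hxz hwx hyz hwy hwz hdet dw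

lemma fin3_eq : ∀ x y z w : Fin 3, y ≠ x → z ≠ x → z ≠ y → w ≠ x → w ≠ y → z = w := by
  intro x y z w
  have hx := x.isLt; have hy := y.isLt; have hz := z.isLt; have hw := w.isLt
  simp only [Ne, Fin.ext_iff]
  omega

lemma fin3_pair : ∀ x p q s : Fin 3, p ≠ x → q ≠ x → s ≠ x → (p = q ∨ q = s ∨ s = p) := by
  intro x p q s
  have hx := x.isLt; have hp := p.isLt; have hq := q.isLt; have hs := s.isLt
  simp only [Ne, Fin.ext_iff]
  omega

lemma mul_lt_one_aux {x y : ℝ} (hx : 0 < x) (hx1 : x < 1) (hy : 0 < y) (hy1 : y < 1) : x*y < 1 := by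
  nlinarith

section Main
variable {X : Finset Pt} {cc : Pt → Fin 3} {a b c : Pt}

lemma min_contra
    (M : ∀ x ∈ X, ∀ y ∈ X, ∀ z ∈ X, cc x = cc y → cc y = cc z → det3 x y z ≠ 0 →
      |det3 a b c| ≤ |det3 x y z|)
    (hD : det3 a b c ≠ 0)
    {x y z : Pt} {m : ℝ} (hx : x ∈ X) (hy : y ∈ X) (hz : z ∈ X)
    (c1 : cc x = cc y) (c2 : cc y = cc z)
    (hdet : det3 x y z = m * det3 a b c) (hm0 : 0 < m) (hm1 : m < 1) : False := by
  have hne : det3 x y z ≠ 0 := by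
    rw [hdet]; exact mul_ne_zero (ne_of_gt hm0) hD
  have hle := M x hx y hy z hz c1 c2 hne
  rw [hdet, abs_mul, abs_of_pos hm0] at hle
  have h0 : 0 < |det3 a b c| := abs_pos.mpr hD
  nlinarith

lemma notKappa
    (M : ∀ x ∈ X, ∀ y ∈ X, ∀ z ∈ X, cc x = cc y → cc y = cc z → det3 x y z ≠ 0 →
      |det3 a b c| ≤ |det3 x y z|)
    (hD : det3 a b c ≠ 0)
    (hbX : b ∈ X) (hcX : c ∈ X) (hab : cc a = cc b) (hbc : cc b = cc c)
    {p : Pt} (hpX : p ∈ X) (hp : p ∈ openSegment ℝ a b) : cc p ≠ cc a := by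
  obtain ⟨k, l, hk, hl, hkl, hpe⟩ := seg_coeff hp
  intro hcp
  have dA : det3 p b c = k * det3 a b c := by
    rw [hpe, det3_aff1 hkl, det3_xxy]; ring
  exact min_contra M hD hpX hbX hcX (hcp.trans hab) hbc dA hk (by linarith)

set_option maxHeartbeats 2000000 in
lemma caseLemma (hPC : ProperColoring X cc)
    (noColl : ∀ x ∈ X, ∀ y ∈ X, ∀ z ∈ X, x ≠ y → x ≠ z → y ≠ z →
      cc x = cc y → cc y = cc z → det3 x y z = 0 → False)
    (haX : a ∈ X) (hbX : b ∈ X) (hcX : c ∈ X)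
    (hab : cc a = cc b) (hbc : cc b = cc c) (hD : det3 a b c ≠ 0)
    (M : ∀ x ∈ X, ∀ y ∈ X, ∀ z ∈ X, cc x = cc y → cc y = cc z → det3 x y z ≠ 0 →
      |det3 a b c| ≤ |det3 x y z|)
    {p q : Pt} (hpX : p ∈ X) (hp : p ∈ openSegment ℝ a b)
    (hqX : q ∈ X) (hq : q ∈ openSegment ℝ b c)
    (hcpq : cc p = cc q) : False := by
  have hca' : cc c = cc a := (hab.trans hbc).symm
  obtain ⟨k, l, hk, hl, hkl, hpe⟩ := seg_coeff hp
  obtain ⟨t1, t2, ht1, ht2, ht12, hqe⟩ := seg_coeff hq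
  have hk1 : k < 1 := by linarith
  have hl1 : l < 1 := by linarith
  have ht11 : t1 < 1 := by linarith
  have ht21 : t2 < 1 := by linarith
  -- determinant coordinates
  have dAp : det3 p b c = k * det3 a b c := by rw [hpe, det3_aff1 hkl, det3_xxy]; ring
  have dBp : det3 a p c = l * det3 a b c := by rw [hpe, det3_aff2 hkl, det3_xxy]; ring
  have dCp : det3 a b p = 0 := by rw [hpe, det3_aff3 hkl, det3_xyx, det3_xyy]; ring
  have dAq : det3 q b c = 0 := by
    rw [hqe, det3_aff1 ht12, det3_xxy, det3_xyx]; ring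
  have dBq : det3 a q c = t1 * det3 a b c := by rw [hqe, det3_aff2 ht12, det3_xyy]; ring
  have dCq : det3 a b q = t2 * det3 a b c := by rw [hqe, det3_aff3 ht12, det3_xyy]; ring
  have hcp : cc p ≠ cc a := by
    intro h
    exact min_contra M hD hpX hbX hcX (h.trans hab) hbc dAp hk hk1
  have hpq : p ≠ q := by
    intro h
    have h0 : t2 * det3 a b c = 0 := by rw [← dCq, ← h, dCp]
    exact mul_ne_zero (ne_of_gt ht2) hD h0
  -- blocker r on (p,q)
  obtain ⟨r, hrX, hr⟩ := hPC p hpX q hqX hpq hcpq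
  obtain ⟨v1, v2, hv1, hv2, hv12, hre⟩ := seg_coeff hr
  have hv11 : v1 < 1 := by linarith
  have hv21 : v2 < 1 := by linarith
  have dAr : det3 r b c = (v1*k) * det3 a b c := by
    rw [hre, det3_aff1 hv12, dAp, dAq]; ring
  have dBr : det3 a r c = (v1*l + v2*t1) * det3 a b c := by
    rw [hre, det3_aff2 hv12, dBp, dBq]; ring
  have dCr : det3 a b r = (v2*t2) * det3 a b c := by
    rw [hre, det3_aff3 hv12, dCp, dCq]; ring
  have dPQr : det3 p q r = 0 := by rw [hre, det3_aff3 hv12, det3_xyx, det3_xyy]; ring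
  have hrp : p ≠ r := by
    intro h
    have h0 : (v2*t2) * det3 a b c = 0 := by rw [← dCr, ← h, dCp]
    exact mul_ne_zero (ne_of_gt (mul_pos hv2 ht2)) hD h0
  have hrq : q ≠ r := by
    intro h
    have h0 : (v1*k) * det3 a b c = 0 := by rw [← dAr, ← h, dAq]
    exact mul_ne_zero (ne_of_gt (mul_pos hv1 hk)) hD h0
  have hcr : cc r ≠ cc a := by
    intro h
    exact min_contra M hD hrX hbX hcX (h.trans hab) hbc dAr (by positivity)
      (mul_lt_one_aux hv1 hv11 hk hk1)
  have hcrp : cc r ≠ cc p := by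
    intro h
    exact noColl p hpX q hqX r hrX hpq hrp hrq hcpq (hcpq ▸ h.symm) dPQr
  -- blocker s on (c,a)
  have hca : c ≠ a := by
    intro h
    rw [h] at hD
    exact hD (det3_xyx a b)
  obtain ⟨s, hsX, hs⟩ := hPC c hcX a haX hca hca'
  obtain ⟨u1, u2, hu1, hu2, hu12, hse⟩ := seg_coeff hs
  have hu11 : u1 < 1 := by linarith
  have hu21 : u2 < 1 := by linarith
  have dAs : det3 s b c = u2 * det3 a b c := by rw [hse, det3_aff1 hu12, det3_xyx]; ring
  have dBs : det3 a s c = 0 := by rw [hse, det3_aff2 hu12, det3_xyy, det3_xxy]; ring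
  have dCs : det3 a b s = u1 * det3 a b c := by rw [hse, det3_aff3 hu12, det3_xyx]; ring
  have hcs : cc s ≠ cc a := by
    intro h
    exact min_contra M hD haX hbX hsX hab (hbc.trans (hca'.trans h.symm)) dCs hu1 hu11
  have hqs : q ≠ s := by
    intro h
    have h0 : t1 * det3 a b c = 0 := by rw [← dBq, h, dBs]
    exact mul_ne_zero (ne_of_gt ht1) hD h0
  have hps : p ≠ s := by
    intro h
    have h0 : l * det3 a b c = 0 := by rw [← dBp, h, dBs]
    exact mul_ne_zero (ne_of_gt hl) hD h0
  have hrs : r ≠ s := by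
    intro h
    have h0 : (v1*l + v2*t1) * det3 a b c = 0 := by rw [← dBr, h, dBs]
    have hpos : 0 < v1*l + v2*t1 := by positivity
    exact mul_ne_zero (ne_of_gt hpos) hD h0
  -- det3 p q s
  have dPQc : det3 p q c = (t1*k) * det3 a b c := by
    rw [hqe, det3_aff2 ht12, dAp, det3_xyy]; ring
  have dPBa : det3 p b a = 0 := by
    rw [hpe, det3_aff1 hkl, det3_xyx, det3_xxy]; ring
  have dPCa : det3 p c a = l * det3 a b c := by
    rw [hpe, det3_aff1 hkl, det3_xyx, det3_cyc]; ring
  have dPQa : det3 p q a = (t2*l) * det3 a b c := by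
    rw [hqe, det3_aff2 ht12, dPBa, dPCa]; ring
  have dPQs : det3 p q s = (u1*(t1*k) + u2*(t2*l)) * det3 a b c := by
    rw [hse, det3_aff3 hu12, dPQc, dPQa]; ring
  have hSpos : 0 < u1*(t1*k) + u2*(t2*l) := by positivity
  have htk : t1*k < 1 := mul_lt_one_aux ht1 ht11 hk hk1
  have htl : t2*l < 1 := mul_lt_one_aux ht2 ht21 hl hl1
  have hS1 : u1*(t1*k) + u2*(t2*l) < 1 := by
    have e1 : u1*(t1*k) < u1 := mul_lt_of_lt_one_right hu1 htk
    have e2 : u2*(t2*l) < u2 := mul_lt_of_lt_one_right hu2 htl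
    linarith
  by_cases hsc : cc s = cc p
  · exact min_contra M hD hpX hqX hsX hcpq (hcpq.symm.trans hsc.symm) dPQs hSpos hS1
  · have hcsr : cc s = cc r := fin3_eq (cc a) (cc p) (cc s) (cc r) hcp hcs hsc hcr hcrp
    obtain ⟨e, heX, he⟩ := hPC r hrX s hsX hrs hcsr.symm
    obtain ⟨w1, w2, hw1, hw2, hw12, hee⟩ := seg_coeff he
    have hw11 : w1 < 1 := by linarith
    have hw21 : w2 < 1 := by linarith
    have dAe : det3 e b c = (w1*(v1*k) + w2*u2) * det3 a b c := by
      rw [hee, det3_aff1 hw12, dAr, dAs]; ring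
    have dBe : det3 a e c = (w1*(v1*l + v2*t1)) * det3 a b c := by
      rw [hee, det3_aff2 hw12, dBr, dBs]; ring
    have dRSe : det3 r s e = 0 := by rw [hee, det3_aff3 hw12, det3_xyx, det3_xyy]; ring
    have dPQe : det3 p q e = (w2*(u1*(t1*k) + u2*(t2*l))) * det3 a b c := by
      rw [hee, det3_aff3 hw12, dPQr, dPQs]; ring
    have her : r ≠ e := by
      intro h
      have h0 : (w1*(v1*l + v2*t1)) * det3 a b c = (v1*l + v2*t1) * det3 a b c := by
        rw [← dBe, ← h, dBr]
      have h1 : (1 - w1) * ((v1*l + v2*t1) * det3 a b c) = 0 := by linear_combination -h0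
      have hpos : 0 < v1*l + v2*t1 := by positivity
      rcases mul_eq_zero.mp h1 with h2 | h2
      · linarith
      · exact mul_ne_zero (ne_of_gt hpos) hD h2
    have hes : s ≠ e := by
      intro h
      have h0 : (w1*(v1*l + v2*t1)) * det3 a b c = 0 := by rw [← dBe, ← h, dBs]
      have hpos : 0 < w1*(v1*l + v2*t1) := by positivity
      exact mul_ne_zero (ne_of_gt hpos) hD h0
    have hce : cc e ≠ cc a := by
      intro h
      have hvk : v1*k < 1 := mul_lt_one_aux hv1 hv11 hk hk1
      have hlt : w1*(v1*k) + w2*u2 < 1 := by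
        have e1 : w1*(v1*k) < w1 := mul_lt_of_lt_one_right hw1 hvk
        have e2 : w2*u2 < w2 := mul_lt_of_lt_one_right hw2 hu21
        linarith
      exact min_contra M hD heX hbX hcX (h.trans hab) hbc dAe (by positivity) hlt
    have hcer : cc e ≠ cc r := by
      intro h
      exact noColl r hrX s hsX e heX hrs her hes hcsr.symm (hcsr.trans h.symm) dRSe
    have hcep : cc e = cc p :=
      fin3_eq (cc a) (cc r) (cc e) (cc p) hcr hce hcer hcp (fun h => hcrp h.symm)
    have hlt2 : w2*(u1*(t1*k) + u2*(t2*l)) < 1 := mul_lt_one_aux hw2 hw21 hSpos hS1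
    exact min_contra M hD hpX hqX heX hcpq (hcpq.symm.trans hcep.symm) dPQe (by positivity) hlt2
end Main

theorem stmt3 (X : Finset Pt) (h3 : AtMost3Collinear X)
    (h : ∃ c : Pt → Fin 3, ProperColoring X c) : X.card ≤ 6 := by
  by_contra hcard
  push_neg at hcard
  obtain ⟨cc, hPC⟩ := h
  have hNC := noColl3 h3 hPC
  -- pigeonhole: some color class has ≥ 3 points
  have hmaps : ∀ x ∈ X, cc x ∈ (Finset.univ : Finset (Fin 3)) := fun x _ => Finset.mem_univ _
  have hlt : (Finset.univ : Finset (Fin 3)).card * 2 < X.card := by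
    simp only [Finset.card_univ, Fintype.card_fin]
    omega
  obtain ⟨y, -, hy⟩ := Finset.exists_lt_card_fiber_of_mul_lt_card_of_maps_to hmaps hlt
  obtain ⟨x1, hx1, x2, hx2, x3, hx3, h12, h13, h23⟩ := Finset.two_lt_card.mp hy
  simp only [Finset.mem_filter] at hx1 hx2 hx3
  -- a unicolored non-collinear triple exists
  have hD0 : det3 x1 x2 x3 ≠ 0 := fun hz =>
    hNC x1 hx1.1 x2 hx2.1 x3 hx3.1 h12 h13 h23 (hx1.2.trans hx2.2.symm)
      (hx2.2.trans hx3.2.symm) hz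
  -- minimize the area over all unicolored non-collinear triples
  set T : Finset (Pt × Pt × Pt) := (X ×ˢ X ×ˢ X).filter
    (fun t => cc t.1 = cc t.2.1 ∧ cc t.2.1 = cc t.2.2 ∧ det3 t.1 t.2.1 t.2.2 ≠ 0) with hT
  have hTne : T.Nonempty := by
    refine ⟨(x1, x2, x3), ?_⟩
    rw [hT, Finset.mem_filter]
    refine ⟨?_, hx1.2.trans hx2.2.symm, hx2.2.trans hx3.2.symm, hD0⟩
    simp [Finset.mem_product, hx1.1, hx2.1, hx3.1]
  obtain ⟨t0, ht0, hmin⟩ := T.exists_min_image (fun t => |det3 t.1 t.2.1 t.2.2|) hTne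
  obtain ⟨a, b, c⟩ := t0
  rw [hT, Finset.mem_filter] at ht0
  obtain ⟨hmem, hab, hbc, hD⟩ := ht0
  simp only [Finset.mem_product] at hmem
  obtain ⟨haX, hbX, hcX⟩ := hmem
  have M : ∀ x ∈ X, ∀ y ∈ X, ∀ z ∈ X, cc x = cc y → cc y = cc z → det3 x y z ≠ 0 →
      |det3 a b c| ≤ |det3 x y z| := by
    intro x hx y hyy z hz c1 c2 hne
    have : (x, y, z) ∈ T := by
      rw [hT, Finset.mem_filter]
      exact ⟨by simp [Finset.mem_product, hx, hyy, hz], c1, c2, hne⟩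
    exact hmin (x, y, z) this
  -- rotated versions
  have hca : cc c = cc a := (hab.trans hbc).symm
  have hDbca : det3 b c a ≠ 0 := by rw [det3_cyc]; exact hD
  have hDcab : det3 c a b ≠ 0 := by rw [det3_cyc, det3_cyc]; exact hD
  have Mbca : ∀ x ∈ X, ∀ y ∈ X, ∀ z ∈ X, cc x = cc y → cc y = cc z → det3 x y z ≠ 0 →
      |det3 b c a| ≤ |det3 x y z| := by
    intro x hx y hyy z hz c1 c2 hne
    rw [det3_cyc]
    exact M x hx y hyy z hz c1 c2 hne
  have Mcab : ∀ x ∈ X, ∀ y ∈ X, ∀ z ∈ X, cc x = cc y → cc y = cc z → det3 x y z ≠ 0 →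
      |det3 c a b| ≤ |det3 x y z| := by
    intro x hx y hyy z hz c1 c2 hne
    rw [det3_cyc, det3_cyc]
    exact M x hx y hyy z hz c1 c2 hne
  -- distinctness of a, b, c
  have hab' : a ≠ b := fun h => hD (by rw [h]; exact det3_xxy b c)
  have hbc' : b ≠ c := fun h => hD (by rw [h]; exact det3_xyy a c)
  have hca' : c ≠ a := fun h => hD (by rw [h]; exact det3_xyx a b)
  -- the three blockers
  obtain ⟨p, hpX, hp⟩ := hPC a haX b hbX hab' hab
  obtain ⟨q, hqX, hq⟩ := hPC b hbX c hcX hbc' hbc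
  obtain ⟨s, hsX, hs⟩ := hPC c hcX a haX hca' hca
  have hcp : cc p ≠ cc a := notKappa M hD hbX hcX hab hbc hpX hp
  have hcq : cc q ≠ cc a := by
    have := notKappa Mbca hDbca hcX haX hbc hca hqX hq
    exact fun h => this (h.trans hab)
  have hcs : cc s ≠ cc a := by
    have := notKappa Mcab hDcab haX hbX hca hab hsX hs
    exact fun h => this (h.trans (hab.trans hbc))
  rcases fin3_pair (cc a) (cc p) (cc q) (cc s) hcp hcq hcs with hpr | hpr | hpr
  · exact caseLemma hPC hNC haX hbX hcX hab hbc hD M hpX hp hqX hq hpr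
  · exact caseLemma hPC hNC hbX hcX haX hbc hca hDbca Mbca hqX hq hsX hs hpr
  · exact caseLemma hPC hNC hcX haX hbX hca hab hDcab Mcab hsX hs hpX hp hpr
end

section
/- In any properly 3-colored 6-point planar set with at most 3 collinear points, each color class has exactly 2 points, and for each color class there is a point of another color on the open segment joining its two points; moreover the three blocking relations among the three color classes form a cyclic pattern (the blocker of each pair belongs to a class whose own pair is blocked by a point of a third class, cyclically). -/
open scoped Classical

/-!
A monochromatic triple is impossible. The blocker `p` of a monochromatic pair `u v` cannot
have their colour: the blocker of `u p` would lie on the line `u v`, hence, with no four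
points collinear, be `v`, and `v` cannot lie strictly between `u` and `p`. So a collinear
triple fails at once (the blocker of two of its points is the third), and a triangle has its
three sides blocked by points of the two other colours; two of these share a colour and
need a seventh blocker strictly inside the triangle. The seven points are told apart by the
supports of their barycentric coordinates, contradicting `|X| = 6`.

Hence every colour class is a pair, blocked by a point of another class. Two classes cannot
block each other, since their four points would be collinear; so the blocking relation is a
3-cycle on the colours.
-/

section Segment

variable {E : Type*} [AddCommGroup E] [Module ℝ E]

theorem wbtw_of_mem_openSegment {x y z : E} (h : y ∈ openSegment ℝ x z) : Wbtw ℝ x y z :=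
  mem_segment_iff_wbtw.1 (openSegment_subset_segment _ _ _ h)

theorem collinear_of_mem_openSegment {x y z : E} (h : y ∈ openSegment ℝ x z) :
    Collinear ℝ {y, x, z} :=
  collinear_insert_of_mem_affineSpan_pair (wbtw_of_mem_openSegment h).mem_affineSpan

theorem notMem_openSegment_of_mem_openSegment {u v p : E} (huv : u ≠ v)
    (hp : p ∈ openSegment ℝ u v) : v ∉ openSegment ℝ u p := fun hv => by
  obtain rfl : p = v :=
    (wbtw_swap_right_iff ℝ u).1 ⟨wbtw_of_mem_openSegment hp, wbtw_of_mem_openSegment hv⟩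
  exact huv (right_mem_openSegment_iff.1 hp)

theorem collinear_of_mem_openSegment_of_mem_openSegment {u v w p : E} (huv : u ≠ v)
    (hu : p ∈ openSegment ℝ u v) (hw : p ∈ openSegment ℝ v w) : Collinear ℝ {u, v, w} := by
  have hpv : p ≠ v := by rintro rfl; exact huv (right_mem_openSegment_iff.1 hu)
  have hu' : u ∈ line[ℝ, p, v] :=
    (collinear_of_mem_openSegment hu).mem_affineSpan_of_mem_of_ne (by simp) (by simp)
      (by simp) hpv
  have hw' : w ∈ line[ℝ, p, v] :=
    (collinear_of_mem_openSegment hw).mem_affineSpan_of_mem_of_ne (by simp) (by simp)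
      (by simp) hpv
  exact (collinear_insert_insert_of_mem_affineSpan_pair hu' hw').subset
    (by intro x; simp only [Set.mem_insert_iff, Set.mem_singleton_iff]; tauto)

end Segment

namespace AffineBasis

variable {ι E : Type*} [AddCommGroup E] [Module ℝ E] (b : AffineBasis ι ℝ E)

theorem coord_mem_openSegment {x y z : E} (hz : z ∈ openSegment ℝ x y) (i : ι) :
    ∃ s t : ℝ, 0 < s ∧ 0 < t ∧ b.coord i z = s * b.coord i x + t * b.coord i y := by
  have h := Set.mem_image_of_mem (b.coord i) hz
  rw [image_openSegment] at h
  obtain ⟨s, t, hs, ht, -, h⟩ := h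
  exact ⟨s, t, hs, ht, by simpa using h.symm⟩

theorem coord_nonneg_of_mem_openSegment {x y z : E} (hx : ∀ i, 0 ≤ b.coord i x)
    (hy : ∀ i, 0 ≤ b.coord i y) (hz : z ∈ openSegment ℝ x y) (i : ι) : 0 ≤ b.coord i z := by
  obtain ⟨s, t, hs, ht, h⟩ := b.coord_mem_openSegment hz i
  have := hx i
  have := hy i
  rw [h]
  positivity

variable [Fintype ι]

noncomputable def posSupport (x : E) : Finset ι := {i | 0 < b.coord i x}

theorem posSupport_self (i : ι) : b.posSupport (b i) = {i} := by
  ext j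
  rcases eq_or_ne j i with rfl | hji
  · simp [posSupport]
  · simp [posSupport, b.coord_apply_ne hji, hji]

theorem posSupport_of_mem_openSegment [DecidableEq ι] {x y z : E} (hx : ∀ i, 0 ≤ b.coord i x)
    (hy : ∀ i, 0 ≤ b.coord i y) (hz : z ∈ openSegment ℝ x y) :
    b.posSupport z = b.posSupport x ∪ b.posSupport y := by
  ext i
  obtain ⟨s, t, hs, ht, h⟩ := b.coord_mem_openSegment hz i
  have := hx i
  have := hy i
  simp only [posSupport, Finset.mem_union, Finset.mem_filter, Finset.mem_univ, true_and, h]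
  constructor
  · intro hpos
    by_contra! hle
    nlinarith
  · rintro (hpos | hpos) <;> positivity

end AffineBasis

section Triangle

variable {E : Type*} [AddCommGroup E] [Module ℝ E] [FiniteDimensional ℝ E]

theorem exists_affineBasis_of_not_collinear (hE : Module.finrank ℝ E = 2) {u v w : E}
    (h : ¬ Collinear ℝ {u, v, w}) :
    ∃ b : AffineBasis (Fin 3) ℝ E, b 0 = u ∧ b 1 = v ∧ b 2 = w :=
  have hind : AffineIndependent ℝ ![u, v, w] := affineIndependent_iff_not_collinear_set.2 h
  ⟨⟨![u, v, w], hind, hind.affineSpan_eq_top_iff_card_eq_finrank_add_one.2 (by simp [hE])⟩,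
    rfl, rfl, rfl⟩

theorem seven_le_card_of_not_collinear [DecidableEq E] (hE : Module.finrank ℝ E = 2)
    {u v w p q r z : E} (h : ¬ Collinear ℝ {u, v, w}) (hp : p ∈ openSegment ℝ u v)
    (hq : q ∈ openSegment ℝ v w) (hr : r ∈ openSegment ℝ u w) (hz : z ∈ openSegment ℝ p q) :
    7 ≤ ({u, v, w, p, q, r, z} : Finset E).card := by
  obtain ⟨b, rfl, rfl, rfl⟩ := exists_affineBasis_of_not_collinear hE h
  have hvert (j i : Fin 3) : 0 ≤ b.coord i (b j) := by
    rcases eq_or_ne i j with rfl | hij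
    · simp
    · simp [b.coord_apply_ne hij]
  have hp₀ := b.coord_nonneg_of_mem_openSegment (hvert 0) (hvert 1) hp
  have hq₀ := b.coord_nonneg_of_mem_openSegment (hvert 1) (hvert 2) hq
  calc 7 = (({b 0, b 1, b 2, p, q, r, z} : Finset E).image b.posSupport).card := by
        simp only [Finset.image_insert, Finset.image_singleton, b.posSupport_self,
          b.posSupport_of_mem_openSegment hp₀ hq₀ hz,
          b.posSupport_of_mem_openSegment (hvert 0) (hvert 1) hp,
          b.posSupport_of_mem_openSegment (hvert 1) (hvert 2) hq,
          b.posSupport_of_mem_openSegment (hvert 0) (hvert 2) hr]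
        -- the supports {0}, {1}, {2}, {0, 1}, {1, 2}, {0, 2}, univ are pairwise distinct
        decide
    _ ≤ _ := Finset.card_image_le

end Triangle

theorem Finset.exists_eq_pair_of_mem {α : Type*} [DecidableEq α] {s : Finset α} {x : α}
    (hs : s.card = 2) (hx : x ∈ s) : ∃ y, x ≠ y ∧ s = {x, y} := by
  obtain ⟨y, hy⟩ := Finset.card_eq_one.1 (by rw [Finset.card_erase_of_mem hx, hs] :
    (s.erase x).card = 1)
  refine ⟨y, fun hxy => ?_, ?_⟩
  · simpa [hxy] using hy.symm.subset (Finset.mem_singleton_self y)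
  · rw [← hy, Finset.insert_erase hx]

theorem Fin.three_cases {a b d : Fin 3} (hab : a ≠ b) (had : a ≠ d) (hbd : b ≠ d) (j : Fin 3) :
    j = a ∨ j = b ∨ j = d := by
  omega

theorem Fin.three_pigeonhole {k a b d : Fin 3} (ha : a ≠ k) (hb : b ≠ k) (hd : d ≠ k) :
    a = b ∨ a = d ∨ b = d := by
  omega

theorem Fin.three_cycle (f : Fin 3 → Fin 3) (h₁ : ∀ k, f k ≠ k) (h₂ : ∀ k, f (f k) ≠ k)
    (k : Fin 3) : f (f (f k)) = k := by
  rcases Fin.three_cases (h₁ k).symm (h₂ k).symm (h₁ (f k)).symm (f (f (f k))) with h | h | h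
  · exact h
  · exact absurd h (h₂ (f k))
  · exact absurd h (h₁ (f (f k)))

namespace AtMost3Collinear

variable {X : Finset Pt}

theorem eq_or_eq_or_eq_of_collinear (h3 : AtMost3Collinear X) {x u v w : Pt} (hx : x ∈ X)
    (hu : u ∈ X) (hv : v ∈ X) (hw : w ∈ X) (huv : u ≠ v) (huw : u ≠ w) (hvw : v ≠ w)
    (hcol : Collinear ℝ {x, u, v, w}) : x = u ∨ x = v ∨ x = w := by
  by_contra! hne
  have hle := h3 {x, u, v, w} (by simp [Finset.insert_subset_iff, *]) (by simpa using hcol)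
  rw [Finset.card_insert_of_notMem (by simp [hne.1, hne.2.1, hne.2.2]),
    Finset.card_eq_three.2 ⟨u, v, w, huv, huw, hvw, rfl⟩] at hle
  omega

theorem eq_of_mem_openSegment (h3 : AtMost3Collinear X) {u v w p : Pt} (hu : u ∈ X)
    (hv : v ∈ X) (hw : w ∈ X) (hp : p ∈ X) (huv : u ≠ v) (huw : u ≠ w) (hvw : v ≠ w)
    (hcol : Collinear ℝ {u, v, w}) (hpuv : p ∈ openSegment ℝ u v) : p = w := by
  have hpline : p ∈ affineSpan ℝ {u, v, w} :=
    affineSpan_mono ℝ (Set.insert_subset_insert (by simp))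
      (wbtw_of_mem_openSegment hpuv).mem_affineSpan
  rcases h3.eq_or_eq_or_eq_of_collinear hp hu hv hw huv huw hvw
    ((collinear_insert_iff_of_mem_affineSpan hpline).2 hcol) with rfl | rfl | rfl
  · exact absurd (left_mem_openSegment_iff.1 hpuv) huv
  · exact absurd (right_mem_openSegment_iff.1 hpuv) huv
  · rfl

theorem notMem_openSegment_of_mem_openSegment (h3 : AtMost3Collinear X) {x y x' y' : Pt}
    (hx : x ∈ X) (hy : y ∈ X) (hx' : x' ∈ X) (hy' : y' ∈ X) (hxy : x ≠ y)
    (h : x' ∈ openSegment ℝ x y) : x ∉ openSegment ℝ x' y' := by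
  intro h'
  have hxx' : x ≠ x' := by rintro rfl; exact hxy (left_mem_openSegment_iff.1 h)
  have hx'y : x' ≠ y := by rintro rfl; exact hxy (right_mem_openSegment_iff.1 h)
  have hy_line : y ∈ line[ℝ, x, x'] :=
    (collinear_of_mem_openSegment h).mem_affineSpan_of_mem_of_ne (by simp) (by simp)
      (by simp) hxx'
  have hy'_line : y' ∈ line[ℝ, x, x'] :=
    (collinear_of_mem_openSegment h').mem_affineSpan_of_mem_of_ne (by simp) (by simp)
      (by simp) hxx'
  rcases h3.eq_or_eq_or_eq_of_collinear hy' hy hx hx' hxy.symm hx'y.symm hxx'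
    (collinear_insert_insert_of_mem_affineSpan_pair hy'_line hy_line) with rfl | rfl | rfl
  · rw [openSegment_symm] at h h'
    exact _root_.notMem_openSegment_of_mem_openSegment hxy.symm h h'
  · exact hxx' (right_mem_openSegment_iff.1 h').symm
  · rw [openSegment_same] at h'
    exact hxx' h'

end AtMost3Collinear

section Coloring

variable {α : Type*} {X : Finset Pt} {c : Pt → α}

theorem ProperColoring.color_ne_of_mem_openSegment (hc : ProperColoring X c)
    (h3 : AtMost3Collinear X) {u v p : Pt} (hu : u ∈ X) (hv : v ∈ X) (hp : p ∈ X) (huv : u ≠ v)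
    (hcuv : c u = c v) (hpuv : p ∈ openSegment ℝ u v) : c p ≠ c u := by
  intro hcp
  have hpu : p ≠ u := by rintro rfl; exact huv (left_mem_openSegment_iff.1 hpuv)
  have hpv : p ≠ v := by rintro rfl; exact huv (right_mem_openSegment_iff.1 hpuv)
  have hcol : Collinear ℝ {u, p, v} := by
    rw [Set.insert_comm]
    exact collinear_of_mem_openSegment hpuv
  obtain ⟨s, hs, hsup⟩ := hc u hu p hp hpu.symm hcp.symm
  obtain rfl := h3.eq_of_mem_openSegment hu hp hv hs hpu.symm huv hpv hcol hsup
  exact notMem_openSegment_of_mem_openSegment huv hpuv hsup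

theorem ProperColoring.not_collinear_of_color_eq (hc : ProperColoring X c)
    (h3 : AtMost3Collinear X) {u v w : Pt} (hu : u ∈ X) (hv : v ∈ X) (hw : w ∈ X)
    (huv : u ≠ v) (huw : u ≠ w) (hvw : v ≠ w) (hcuv : c u = c v) (hcuw : c u = c w) :
    ¬ Collinear ℝ {u, v, w} := fun hcol => by
  obtain ⟨p, hp, hpuv⟩ := hc u hu v hv huv hcuv
  obtain rfl := h3.eq_of_mem_openSegment hu hv hw hp huv huw hvw hcol hpuv
  exact hc.color_ne_of_mem_openSegment h3 hu hv hp huv hcuv hpuv hcuw.symm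

def colorClass [DecidableEq α] (X : Finset Pt) (c : Pt → α) (k : α) : Finset Pt :=
  X.filter (fun p => c p = k)

variable [DecidableEq α]

@[simp]
theorem mem_colorClass {k : α} {x : Pt} : x ∈ colorClass X c k ↔ x ∈ X ∧ c x = k :=
  Finset.mem_filter

theorem mem_colorClass_of_eq_pair {k : α} {x y : Pt} (h : colorClass X c k = {x, y}) :
    (x ∈ X ∧ c x = k) ∧ (y ∈ X ∧ c y = k) := by
  simp only [← mem_colorClass, h, Finset.mem_insert, Finset.mem_singleton, true_or, or_true,
    and_self]

theorem ProperColoring.exists_blocker (hc : ProperColoring X c) (h3 : AtMost3Collinear X)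
    {k : α} (hk : (colorClass X c k).card = 2) :
    ∃ z ∈ X, c z ≠ k ∧ ∀ x y, colorClass X c k = {x, y} → z ∈ openSegment ℝ x y := by
  obtain ⟨x₀, y₀, hxy₀, h₀⟩ := Finset.card_eq_two.1 hk
  obtain ⟨⟨hx₀X, hx₀⟩, hy₀X, hy₀⟩ := mem_colorClass_of_eq_pair h₀
  obtain ⟨z, hz, hzxy⟩ := hc x₀ hx₀X y₀ hy₀X hxy₀ (hx₀.trans hy₀.symm)
  refine ⟨z, hz, hx₀ ▸ hc.color_ne_of_mem_openSegment h3 hx₀X hy₀X hz hxy₀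
    (hx₀.trans hy₀.symm) hzxy, fun x y hxy => ?_⟩
  have hpair := congrArg (fun s : Finset Pt => (s : Set Pt)) (h₀.symm.trans hxy)
  simp only [Finset.coe_insert, Finset.coe_singleton, Set.pair_eq_pair_iff] at hpair
  rcases hpair with ⟨rfl, rfl⟩ | ⟨rfl, rfl⟩
  · exact hzxy
  · rwa [openSegment_symm]

theorem AtMost3Collinear.not_blocks_mutually (h3 : AtMost3Collinear X) {k k' : α}
    (hk : (colorClass X c k).card = 2) (hk' : (colorClass X c k').card = 2) {z z' : Pt}
    (hz : z ∈ colorClass X c k') (hz' : z' ∈ colorClass X c k)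
    (hblock : ∀ x y, colorClass X c k = {x, y} → z ∈ openSegment ℝ x y)
    (hblock' : ∀ x y, colorClass X c k' = {x, y} → z' ∈ openSegment ℝ x y) : False := by
  obtain ⟨x, -, hx⟩ := Finset.exists_eq_pair_of_mem hk' hz
  obtain ⟨y, hz'y, hy⟩ := Finset.exists_eq_pair_of_mem hk hz'
  obtain ⟨⟨hzX, -⟩, hxX, -⟩ := mem_colorClass_of_eq_pair hx
  obtain ⟨⟨hz'X, -⟩, hyX, -⟩ := mem_colorClass_of_eq_pair hy
  exact h3.notMem_openSegment_of_mem_openSegment hz'X hyX hzX hxX hz'y (hblock _ _ hy)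
    (hblock' _ _ hx)

end Coloring

section ThreeColors

variable {X : Finset Pt} {c : Pt → Fin 3}

theorem ProperColoring.color_ne_of_triangle (hc : ProperColoring X c) (hX : X.card ≤ 6)
    {u v w p q r : Pt} (hu : u ∈ X) (hv : v ∈ X) (hw : w ∈ X) (hp : p ∈ X) (hq : q ∈ X)
    (hr : r ∈ X) (hncol : ¬ Collinear ℝ {u, v, w}) (hpuv : p ∈ openSegment ℝ u v)
    (hqvw : q ∈ openSegment ℝ v w) (hruw : r ∈ openSegment ℝ u w) : c p ≠ c q := by
  intro hpq
  have huv : u ≠ v := by rintro rfl; exact hncol (by simp [collinear_pair])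
  have hpq' : p ≠ q := by
    rintro rfl
    exact hncol (collinear_of_mem_openSegment_of_mem_openSegment huv hpuv hqvw)
  obtain ⟨z, hz, hzpq⟩ := hc p hp q hq hpq' hpq
  have h7 := (seven_le_card_of_not_collinear (by simp) hncol hpuv hqvw hruw hzpq).trans
    (Finset.card_le_card (s := {u, v, w, p, q, r, z}) (t := X) (by
      simpa only [Finset.insert_subset_iff, Finset.singleton_subset_iff]
        using ⟨hu, hv, hw, hp, hq, hr, hz⟩))
  omega

theorem ProperColoring.no_monochromatic_triple (hc : ProperColoring X c)
    (h3 : AtMost3Collinear X) (hX : X.card ≤ 6) {u v w : Pt} (hu : u ∈ X) (hv : v ∈ X)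
    (hw : w ∈ X) (huv : u ≠ v) (huw : u ≠ w) (hvw : v ≠ w) (hcuv : c u = c v)
    (hcuw : c u = c w) : False := by
  have hncol := hc.not_collinear_of_color_eq h3 hu hv hw huv huw hvw hcuv hcuw
  have hcvw : c v = c w := hcuv.symm.trans hcuw
  obtain ⟨p, hp, hpuv⟩ := hc u hu v hv huv hcuv
  obtain ⟨q, hq, hqvw⟩ := hc v hv w hw hvw hcvw
  obtain ⟨r, hr, hruw⟩ := hc u hu w hw huw hcuw
  have hcp := hc.color_ne_of_mem_openSegment h3 hu hv hp huv hcuv hpuv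
  have hcq := hc.color_ne_of_mem_openSegment h3 hv hw hq hvw hcvw hqvw
  have hcr := hc.color_ne_of_mem_openSegment h3 hu hw hr huw hcuw hruw
  rw [openSegment_symm] at hpuv
  rcases Fin.three_pigeonhole hcp (hcuv ▸ hcq) hcr with hpq | hpr | hqr
  · exact hc.color_ne_of_triangle hX hu hv hw hp hq hr hncol
      (by rwa [openSegment_symm]) hqvw hruw hpq
  · exact hc.color_ne_of_triangle hX hv hu hw hp hr hq (by rwa [Set.insert_comm])
      hpuv hruw hqvw hpr
  · exact hc.color_ne_of_triangle hX hv hw hu hq hr hp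
      (by rwa [Set.pair_comm, Set.insert_comm]) hqvw (by rwa [openSegment_symm]) hpuv hqr

theorem ProperColoring.card_colorClass_le_two (hc : ProperColoring X c)
    (h3 : AtMost3Collinear X) (hX : X.card ≤ 6) (k : Fin 3) : (colorClass X c k).card ≤ 2 := by
  by_contra! h
  obtain ⟨u, hu, v, hv, w, hw, huv, huw, hvw⟩ := Finset.two_lt_card.1 h
  rw [mem_colorClass] at hu hv hw
  exact hc.no_monochromatic_triple h3 hX hu.1 hv.1 hw.1 huv huw hvw (hu.2.trans hv.2.symm)
    (hu.2.trans hw.2.symm)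

theorem card_colorClass_eq_two (hX : X.card = 6) (hle : ∀ k, (colorClass X c k).card ≤ 2)
    (k : Fin 3) : (colorClass X c k).card = 2 := by
  have hsum := Finset.card_eq_sum_card_fiberwise (s := X) (t := Finset.univ) (f := c)
    (fun x _ => Finset.mem_univ (c x))
  rw [hX, Fin.sum_univ_three] at hsum
  have := hle 0
  have := hle 1
  have := hle 2
  rcases Fin.three_cases (by decide : (0 : Fin 3) ≠ 1) (by decide : (0 : Fin 3) ≠ 2)
    (by decide : (1 : Fin 3) ≠ 2) k with rfl | rfl | rfl <;>
    simp only [colorClass] at * <;> omega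

theorem colorClass_union_eq {j₀ j₁ j₂ : Fin 3} (h₀₁ : j₀ ≠ j₁) (h₀₂ : j₀ ≠ j₂) (h₁₂ : j₁ ≠ j₂) :
    colorClass X c j₀ ∪ (colorClass X c j₁ ∪ colorClass X c j₂) = X := by
  ext x
  have := Fin.three_cases h₀₁ h₀₂ h₁₂ (c x)
  simp only [Finset.mem_union, mem_colorClass]
  tauto

end ThreeColors

theorem stmt5 (X : Finset Pt) (c : Pt → Fin 3) (hcard : X.card = 6)
    (h3 : AtMost3Collinear X) (hc : ProperColoring X c) :
    (∀ k : Fin 3, (X.filter (fun p => c p = k)).card = 2) ∧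
    ∃ a a' b b' d d' : Pt, X = ({a, a', b, b', d, d'} : Finset Pt) ∧
      c a = c a' ∧ c b = c b' ∧ c d = c d' ∧
      c a ≠ c b ∧ c b ≠ c d ∧ c a ≠ c d ∧
      b ∈ openSegment ℝ a a' ∧ d ∈ openSegment ℝ b b' ∧
      a ∈ openSegment ℝ d d' := by
  have hcls : ∀ k, (colorClass X c k).card = 2 :=
    card_colorClass_eq_two hcard (hc.card_colorClass_le_two h3 hcard.le)
  refine ⟨hcls, ?_⟩
  choose β hβX hβc hβ using fun k => hc.exists_blocker h3 (hcls k)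
  have hβmem (k : Fin 3) : β k ∈ colorClass X c (c (β k)) := mem_colorClass.2 ⟨hβX k, rfl⟩
  have hcycle (k : Fin 3) : c (β (c (β k))) ≠ k := fun h =>
    h3.not_blocks_mutually (hcls k) (hcls _) (hβmem k) (mem_colorClass.2 ⟨hβX _, h⟩) (hβ k) (hβ _)
  set k₁ := c (β 0)
  set k₂ := c (β k₁)
  have h₀ : c (β k₂) = 0 := Fin.three_cycle (fun k => c (β k)) hβc hcycle 0
  obtain ⟨a', -, hA⟩ := Finset.exists_eq_pair_of_mem (hcls 0) (mem_colorClass.2 ⟨hβX k₂, h₀⟩)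
  obtain ⟨b', -, hB⟩ := Finset.exists_eq_pair_of_mem (hcls k₁) (hβmem 0)
  obtain ⟨d', -, hD⟩ := Finset.exists_eq_pair_of_mem (hcls k₂) (hβmem k₁)
  obtain ⟨-, -, ha'⟩ := mem_colorClass_of_eq_pair hA
  obtain ⟨-, -, hb'⟩ := mem_colorClass_of_eq_pair hB
  obtain ⟨-, -, hd'⟩ := mem_colorClass_of_eq_pair hD
  have h₀₁ : (0 : Fin 3) ≠ k₁ := (hβc 0).symm
  have h₀₂ : (0 : Fin 3) ≠ k₂ := (hcycle 0).symm
  have h₁₂ : k₁ ≠ k₂ := (hβc k₁).symm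
  refine ⟨β k₂, a', β 0, b', β k₁, d', ?_, h₀.trans ha'.symm, hb'.symm, hd'.symm,
    by rwa [h₀], h₁₂, by rwa [h₀], hβ 0 _ _ hA, hβ k₁ _ _ hB, hβ k₂ _ _ hD⟩
  rw [← colorClass_union_eq (X := X) (c := c) h₀₁ h₀₂ h₁₂, hA, hB, hD]
  simp only [Finset.insert_union, Finset.singleton_union]
end

section
/- Let H be the vertex set of a convex hexagon in the plane (6 points in convex position). Any set X of points blocking all 15 open segments determined by pairs of vertices of H (i.e., every open segment between two vertices of H contains a point of X) has at least 10 points. -/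
open scoped Classical

/-!
Label the hexagon `v 0, …, v 5` so that every triple `v i, v j, v k` with `i < j < k` is
positively oriented (sort the vertices by angle around the lexicographically least one). Then two
of the 15 open segments meet only if they cross, i.e. their endpoint indices interleave. A side
crosses nothing, and three pairwise crossing diagonals are the three main diagonals. So if sides
weigh `2`, diagonals `1` and the main diagonal `v 0 v 3` weighs `0`, the segments through any
single point weigh at most `2` in total, while all segments together weigh `20`.
-/

open Finset

def orient (a b c : Pt) : ℝ := (b.1 - a.1) * (c.2 - a.2) - (b.2 - a.2) * (c.1 - a.1)

lemma orient_rotate (a b c : Pt) : orient a b c = orient b c a := by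
  unfold orient; ring

lemma orient_swap (a b c : Pt) : orient a c b = -orient a b c := by
  unfold orient; ring

lemma orient_self₁₂ (a b : Pt) : orient a a b = 0 := by
  unfold orient; ring

lemma orient_self₁₃ (a b : Pt) : orient a b a = 0 := by
  unfold orient; ring

lemma orient_self₂₃ (a b : Pt) : orient a b b = 0 := by
  unfold orient; ring

lemma orient_add_smul {α β : ℝ} (h : α + β = 1) (a b c d : Pt) :
    orient a b (α • c + β • d) = α * orient a b c + β * orient a b d := by
  obtain rfl : β = 1 - α := by linarith
  simp only [orient, Prod.fst_add, Prod.snd_add, Prod.smul_fst, Prod.smul_snd, smul_eq_mul]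
  ring

lemma orient_mul_orient_neg_or_eq_zero {a b c d p : Pt} (hab : p ∈ openSegment ℝ a b)
    (hcd : p ∈ openSegment ℝ c d) :
    orient a b c * orient a b d < 0 ∨ orient a b c = 0 ∧ orient a b d = 0 := by
  obtain ⟨α, β, hα, hβ, hαβ, rfl⟩ := hab
  obtain ⟨γ, δ, hγ, hδ, hγδ, hp⟩ := hcd
  have hzero : γ * orient a b c + δ * orient a b d = 0 := by
    rw [← orient_add_smul hγδ, hp, orient_add_smul hαβ, orient_self₁₃, orient_self₂₃]
    ring
  rcases lt_trichotomy (orient a b c) 0 with h | h | h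
  · have : 0 < orient a b d :=
      pos_of_mul_pos_right (by nlinarith [mul_neg_of_pos_of_neg hγ h]) hδ.le
    exact .inl (mul_neg_of_neg_of_pos h this)
  · right; refine ⟨h, ?_⟩; rw [h, mul_zero, zero_add] at hzero
    exact (mul_eq_zero.1 hzero).resolve_left hδ.ne'
  · have : orient a b d < 0 := neg_of_mul_neg_right (by nlinarith [mul_pos hγ h]) hδ.le
    exact .inl (mul_neg_of_pos_of_neg h this)

lemma mem_convexHull_of_smul_eq {E : Type*} [AddCommGroup E] [Module ℝ E] {s : Set E}
    {x y z p : E} (hx : x ∈ s) (hy : y ∈ s) (hz : z ∈ s) {α β γ : ℝ} (hα : 0 ≤ α) (hβ : 0 ≤ β)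
    (hγ : 0 ≤ γ) (hσ : 0 < α + β + γ) (h : (α + β + γ) • p = α • x + β • y + γ • z) :
    p ∈ convexHull ℝ s := by
  have hp : p = univ.centerMass ![α, β, γ] ![x, y, z] := by
    simp [centerMass, Fin.sum_univ_three, ← h, inv_smul_smul₀ hσ.ne']
  rw [hp]
  refine (convex_convexHull ℝ s).centerMass_mem (by simp [Fin.forall_fin_succ, hα, hβ, hγ])
    (by simpa [Fin.sum_univ_three] using hσ) ?_
  simp [Fin.forall_fin_succ, subset_convexHull ℝ s hx, subset_convexHull ℝ s hy,
    subset_convexHull ℝ s hz]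

namespace ConvexPos

variable {H : Finset Pt}

lemma smul_ne_smul_add_smul_add_smul (hconv : ConvexPos H) {p x y z : Pt} (hp : p ∈ H)
    (hx : x ∈ H) (hy : y ∈ H) (hz : z ∈ H) (hxp : x ≠ p) (hyp : y ≠ p) (hzp : z ≠ p)
    {α β γ : ℝ} (hα : 0 ≤ α) (hβ : 0 ≤ β) (hγ : 0 ≤ γ) (hσ : 0 < α + β + γ) :
    (α + β + γ) • p ≠ α • x + β • y + γ • z := fun h =>
  hconv p hp <| mem_convexHull_of_smul_eq (by simp [hx, hxp]) (by simp [hy, hyp])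
    (by simp [hz, hzp]) hα hβ hγ hσ h

lemma orient_ne_zero (hconv : ConvexPos H) {a b c : Pt} (ha : a ∈ H) (hb : b ∈ H) (hc : c ∈ H)
    (hab : a ≠ b) (hac : a ≠ c) (hbc : b ≠ c) : orient a b c ≠ 0 := by
  intro h
  set n := (b.1 - a.1) ^ 2 + (b.2 - a.2) ^ 2
  set m := (b.1 - a.1) * (c.1 - a.1) + (b.2 - a.2) * (c.2 - a.2)
  have hn : 0 < n := by
    by_contra! hn
    exact hab (Prod.ext (by nlinarith [sq_nonneg (b.1 - a.1), sq_nonneg (b.2 - a.2)])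
      (by nlinarith [sq_nonneg (b.1 - a.1), sq_nonneg (b.2 - a.2)]))
  -- `orient a b c = 0` says that `c - a` equals its projection `(m / n) • (b - a)`
  unfold orient at h
  have h₁ : n * c.1 = (n - m) * a.1 + m * b.1 := by linear_combination -(b.2 - a.2) * h
  have h₂ : n * c.2 = (n - m) * a.2 + m * b.2 := by linear_combination (b.1 - a.1) * h
  rcases le_total m 0 with hm | hm
  · refine hconv.smul_ne_smul_add_smul_add_smul ha hc hb hb hac.symm hab.symm hab.symm
      (α := n) (β := -m) (γ := 0) hn.le (by linarith) le_rfl (by linarith) ?_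
    ext <;> simp <;> linarith
  rcases le_total m n with hmn | hmn
  · refine hconv.smul_ne_smul_add_smul_add_smul hc ha hb hb hac hbc hbc
      (α := n - m) (β := m) (γ := 0) (by linarith) hm le_rfl (by linarith) ?_
    ext <;> simp <;> linarith
  · refine hconv.smul_ne_smul_add_smul_add_smul hb hc ha ha hbc.symm hab hab
      (α := n) (β := m - n) (γ := 0) hn.le (by linarith) le_rfl (by linarith) ?_
    ext <;> simp <;> linarith

lemma orient_pos_of_orient_pos (hconv : ConvexPos H) {o a b c : Pt} (ho : o ∈ H) (ha : a ∈ H)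
    (hb : b ∈ H) (hc : c ∈ H) (hab : 0 < orient o a b) (hbc : 0 < orient o b c)
    (hac : 0 < orient o a c) : 0 < orient a b c := by
  have hne : ∀ {x y z : Pt}, 0 < orient x y z → x ≠ y ∧ x ≠ z ∧ y ≠ z := by
    intro x y z h
    refine ⟨?_, ?_, ?_⟩ <;> rintro rfl
    exacts [(orient_self₁₂ x z ▸ h).false, (orient_self₁₃ x y ▸ h).false,
      (orient_self₂₃ x y ▸ h).false]
  obtain ⟨-, hob, hab'⟩ := hne hab
  obtain ⟨-, -, hbc'⟩ := hne hbc
  obtain ⟨-, -, hac'⟩ := hne hac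
  refine (hconv.orient_ne_zero ha hb hc hab' hac' hbc').symm.lt_of_le (not_lt.1 fun hneg => ?_)
  -- Cramer's rule: `orient o a c • b = orient o b c • a + orient o a b • c - orient a b c • o`
  have hsum : orient o b c + orient o a b + -orient a b c = orient o a c := by
    unfold orient; ring
  refine hconv.smul_ne_smul_add_smul_add_smul hb ha hc ho hab' hbc'.symm hob hbc.le hab.le
    (neg_nonneg.2 hneg.le) (hsum ▸ hac) ?_
  ext <;> simp [orient] <;> ring

end ConvexPos

lemma orient_pos_trans_of_toLex_lt {o a b c : Pt} (ha : toLex o < toLex a)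
    (hb : toLex o < toLex b) (hc : toLex o < toLex c) (hab : 0 < orient o a b)
    (hbc : 0 < orient o b c) : 0 < orient o a c := by
  rw [Prod.Lex.toLex_lt_toLex] at ha hb hc
  unfold orient at *
  rcases hb with hb | ⟨hb₁, hb₂⟩
  · rcases ha with ha | ⟨ha₁, ha₂⟩
    · rcases hc with hc | ⟨hc₁, hc₂⟩
      · -- `(a - o).1 * orient o b c + (c - o).1 * orient o a b = (b - o).1 * orient o a c`
        nlinarith [mul_pos (sub_pos.2 ha) hbc, mul_pos (sub_pos.2 hc) hab]
      · rw [← hc₁]; nlinarith [mul_pos (sub_pos.2 ha) (sub_pos.2 hc₂)]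
    · rw [← ha₁] at hab; nlinarith [mul_pos (sub_pos.2 ha₂) (sub_pos.2 hb)]
  · rcases hc with hc | ⟨hc₁, hc₂⟩
    · rw [← hb₁] at hbc; nlinarith [mul_pos (sub_pos.2 hb₂) (sub_pos.2 hc)]
    · rw [← hb₁, ← hc₁] at hbc; linarith

section StrictTotalOn

variable {α : Type*} {r : α → α → Prop} {s : Set α}

lemma Finset.exists_forall_rel_of_total {T : Finset α} (hTs : ↑T ⊆ s) (hT : T.Nonempty)
    (hirr : ∀ a ∈ s, ¬r a a) (htot : ∀ a ∈ s, ∀ b ∈ s, a ≠ b → r a b ∨ r b a)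
    (htrans : ∀ a ∈ s, ∀ b ∈ s, ∀ c ∈ s, r a b → r b c → r a c) :
    ∃ a ∈ T, ∀ b ∈ T, b ≠ a → r a b := by
  -- an element with the fewest `r`-predecessors has none
  obtain ⟨a, ha, hmin⟩ := T.exists_min_image (fun a => #{x ∈ T | r x a}) hT
  refine ⟨a, ha, fun b hb hba => (htot a (hTs ha) b (hTs hb) hba.symm).resolve_right
    fun hba' => (hmin b hb).not_gt (card_lt_card ?_)⟩
  refine (ssubset_iff_of_subset fun x hx => ?_).2
    ⟨b, by simp [hb, hba'], by simp [hirr b (hTs hb)]⟩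
  simp only [mem_filter] at hx ⊢
  exact ⟨hx.1, htrans x (hTs hx.1) b (hTs hb) a (hTs ha) hx.2 hba'⟩

lemma Finset.exists_fin_enum (hirr : ∀ a ∈ s, ¬r a a)
    (htot : ∀ a ∈ s, ∀ b ∈ s, a ≠ b → r a b ∨ r b a)
    (htrans : ∀ a ∈ s, ∀ b ∈ s, ∀ c ∈ s, r a b → r b c → r a c) :
    ∀ {n : ℕ} {T : Finset α}, T.card = n → ↑T ⊆ s →
      ∃ f : Fin n → α, (∀ i, f i ∈ T) ∧ Function.Injective f ∧ ∀ i j, i < j → r (f i) (f j)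
  | 0, T, _, _ => ⟨Fin.elim0, fun i => i.elim0, fun i => i.elim0, fun i => i.elim0⟩
  | n + 1, T, hcard, hTs => by
    obtain ⟨a, ha, hmin⟩ :=
      T.exists_forall_rel_of_total hTs (card_pos.1 (by omega)) hirr htot htrans
    obtain ⟨g, hgT, hginj, hg⟩ := Finset.exists_fin_enum hirr htot htrans
      (T := T.erase a) (by rw [card_erase_of_mem ha, hcard])
      ((coe_subset.2 (erase_subset a T)).trans hTs)
    refine ⟨Fin.cons a g, Fin.cases ha fun i => mem_of_mem_erase (hgT i),
      Fin.cons_injective_iff.2 ⟨fun ⟨i, hi⟩ => ne_of_mem_erase (hgT i) hi, hginj⟩, ?_⟩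
    intro i j hij
    obtain ⟨j, rfl⟩ := Fin.exists_succ_eq.2 (ne_bot_of_gt hij)
    cases i using Fin.cases with
    | zero => exact hmin _ (mem_of_mem_erase (hgT j)) (ne_of_mem_erase (hgT j))
    | succ i => exact hg i j (Fin.succ_lt_succ_iff.1 hij)

end StrictTotalOn

def IsConvexLabeling {n : ℕ} (v : Fin n → Pt) : Prop :=
  ∀ i j k, i < j → j < k → 0 < orient (v i) (v j) (v k)

lemma ConvexPos.exists_isConvexLabeling {H : Finset Pt} (hconv : ConvexPos H) {n : ℕ}
    (hcard : H.card = n + 1) :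
    ∃ v : Fin (n + 1) → Pt, (∀ i, v i ∈ H) ∧ Function.Injective v ∧ IsConvexLabeling v := by
  -- sort the other points by angle around the lexicographically least point `o`
  obtain ⟨o, ho, hmin⟩ := H.exists_min_image toLex (card_pos.1 (by omega))
  set T := H.erase o
  have hlex : ∀ a ∈ (T : Set Pt), toLex o < toLex a := fun a ha =>
    (hmin a (mem_of_mem_erase ha)).lt_of_ne fun h => ne_of_mem_erase ha (toLex.injective h).symm
  obtain ⟨w, hwT, hwinj, hw⟩ := Finset.exists_fin_enum (r := fun a b => 0 < orient o a b)
    (s := T) (fun a _ h => (orient_self₂₃ o a ▸ h).false)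
    (fun a ha b hb hab => by
      rw [orient_swap o a b, neg_pos]
      exact (hconv.orient_ne_zero ho (mem_of_mem_erase ha) (mem_of_mem_erase hb)
        (ne_of_mem_erase ha).symm (ne_of_mem_erase hb).symm hab).lt_or_gt.symm)
    (fun a ha b hb c hc => orient_pos_trans_of_toLex_lt (hlex a ha) (hlex b hb) (hlex c hc))
    (by rw [card_erase_of_mem ho, hcard]) subset_rfl
  have hwH : ∀ i, w i ∈ H := fun i => mem_of_mem_erase (hwT i)
  refine ⟨Fin.cons o w, Fin.cases ho hwH,
    Fin.cons_injective_iff.2 ⟨fun ⟨i, hi⟩ => ne_of_mem_erase (hwT i) hi, hwinj⟩, ?_⟩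
  intro i j k hij hjk
  obtain ⟨j, rfl⟩ := Fin.exists_succ_eq.2 (ne_bot_of_gt hij)
  obtain ⟨k, rfl⟩ := Fin.exists_succ_eq.2 (ne_bot_of_gt hjk)
  cases i using Fin.cases with
  | zero => exact hw j k (Fin.succ_lt_succ_iff.1 hjk)
  | succ i =>
    exact hconv.orient_pos_of_orient_pos ho (hwH i) (hwH j) (hwH k)
      (hw i j (Fin.succ_lt_succ_iff.1 hij)) (hw j k (Fin.succ_lt_succ_iff.1 hjk))
      (hw i k (Fin.succ_lt_succ_iff.1 (hij.trans hjk)))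

def Crosses {n : ℕ} (e f : Fin n × Fin n) : Prop :=
  e.1 < f.1 ∧ f.1 < e.2 ∧ e.2 < f.2 ∨ f.1 < e.1 ∧ e.1 < f.2 ∧ f.2 < e.2

namespace IsConvexLabeling

variable {n : ℕ} {v : Fin n → Pt}

lemma orient_pos_iff (hv : IsConvexLabeling v) {i j m : Fin n} (hij : i < j) :
    0 < orient (v i) (v j) (v m) ↔ m < i ∨ j < m := by
  refine ⟨fun h => ?_, ?_⟩
  · by_contra! hm
    rcases hm.1.lt_or_eq with hi | rfl
    · rcases hm.2.lt_or_eq with hj | rfl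
      · have := hv i m j hi hj
        rw [orient_swap] at h
        linarith
      · exact (orient_self₂₃ _ _ ▸ h).false
    · exact (orient_self₁₃ _ _ ▸ h).false
  · rintro (hm | hm)
    · rw [← orient_rotate]; exact hv m i j hm hij
    · exact hv i j m hij hm

lemma orient_neg_iff (hv : IsConvexLabeling v) {i j m : Fin n} (hij : i < j) :
    orient (v i) (v j) (v m) < 0 ↔ i < m ∧ m < j := by
  refine ⟨fun h => ?_, fun hm => ?_⟩
  · by_contra! hm
    rcases lt_trichotomy m i with hi | rfl | hi
    · linarith [(hv.orient_pos_iff hij).2 (.inl hi)]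
    · exact (orient_self₁₃ _ _ ▸ h).false
    rcases (hm hi).lt_or_eq with hj | rfl
    · linarith [(hv.orient_pos_iff hij).2 (.inr hj)]
    · exact (orient_self₂₃ _ _ ▸ h).false
  · rw [orient_swap (v i) (v m) (v j), neg_lt_zero]; exact hv i m j hm.1 hm.2

lemma crosses_of_mem_openSegment (hv : IsConvexLabeling v) {e f : Fin n × Fin n}
    (he : e.1 < e.2) (hf : f.1 < f.2) (hef : e ≠ f) {p : Pt}
    (hpe : p ∈ openSegment ℝ (v e.1) (v e.2)) (hpf : p ∈ openSegment ℝ (v f.1) (v f.2)) :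
    Crosses e f := by
  have hpos := fun m => hv.orient_pos_iff (m := m) he
  have hneg := fun m => hv.orient_neg_iff (m := m) he
  unfold Crosses
  rcases orient_mul_orient_neg_or_eq_zero hpe hpf with h | ⟨h₁, h₂⟩
  · rcases mul_neg_iff.1 h with ⟨h₁, h₂⟩ | ⟨h₁, h₂⟩
    · rw [hpos] at h₁; rw [hneg] at h₂; omega
    · rw [hneg] at h₁; rw [hpos] at h₂; omega
  · have hzero : ∀ m, orient (v e.1) (v e.2) (v m) = 0 → m = e.1 ∨ m = e.2 := fun m h => by
      have := (hpos m).not.1 h.le.not_gt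
      have := (hneg m).not.1 h.ge.not_gt
      omega
    have := hzero _ h₁
    have := hzero _ h₂
    exact absurd (Prod.ext (by omega) (by omega)) hef

end IsConvexLabeling

def orderedPairs (n : ℕ) : Finset (Fin n × Fin n) := {e | e.1 < e.2}

lemma mem_orderedPairs {n : ℕ} {e : Fin n × Fin n} : e ∈ orderedPairs n ↔ e.1 < e.2 := by
  simp [orderedPairs]

def hexWeight (e : Fin 6 × Fin 6) : ℕ :=
  if e.2 = e.1 + 1 ∨ e.1 = e.2 + 1 then 2 else if e = (0, 3) then 0 else 1

lemma sum_hexWeight_orderedPairs : ∑ e ∈ orderedPairs 6, hexWeight e = 20 := by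
  decide

lemma not_crosses_of_adjacent :
    ∀ e f : Fin 6 × Fin 6, (e.2 = e.1 + 1 ∨ e.1 = e.2 + 1) → ¬Crosses e f := by
  unfold Crosses; decide

set_option maxHeartbeats 4000000 in
lemma eq_zero_three_of_crosses :
    ∀ a b c : Fin 6 × Fin 6, Crosses a b → Crosses a c → Crosses b c →
      a = (0, 3) ∨ b = (0, 3) ∨ c = (0, 3) := by
  unfold Crosses; decide

lemma sum_hexWeight_le_two {S : Finset (Fin 6 × Fin 6)}
    (hS : (S : Set (Fin 6 × Fin 6)).Pairwise Crosses) : ∑ e ∈ S, hexWeight e ≤ 2 := by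
  by_cases hside : ∃ e ∈ S, e.2 = e.1 + 1 ∨ e.1 = e.2 + 1
  · obtain ⟨e, he, hside⟩ := hside
    obtain rfl : S = {e} := eq_singleton_iff_unique_mem.2 ⟨he, fun f hf =>
      by_contra fun hfe => not_crosses_of_adjacent e f hside (hS he hf (Ne.symm hfe))⟩
    simp [hexWeight, hside]
  push Not at hside
  have hsum : ∑ e ∈ S, hexWeight e = #{e ∈ S | e ≠ (0, 3)} := by
    rw [card_filter]
    refine sum_congr rfl fun e he => ?_
    simp [hexWeight, hside e he, ite_not]
  by_contra! h
  obtain ⟨a, ha, b, hb, c, hc, hab, hac, hbc⟩ := two_lt_card.1 (hsum ▸ h)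
  simp only [mem_filter] at ha hb hc
  rcases eq_zero_three_of_crosses a b c (hS ha.1 hb.1 hab) (hS ha.1 hc.1 hac)
    (hS hb.1 hc.1 hbc) with h | h | h
  exacts [ha.2 h, hb.2 h, hc.2 h]

lemma IsConvexLabeling.ten_le_card_image {v : Fin 6 → Pt} (hv : IsConvexLabeling v)
    {b : Fin 6 × Fin 6 → Pt} (hb : ∀ e ∈ orderedPairs 6, b e ∈ openSegment ℝ (v e.1) (v e.2)) :
    10 ≤ #((orderedPairs 6).image b) := by
  have hfiber (q : Pt) : ∑ e ∈ orderedPairs 6 with b e = q, hexWeight e ≤ 2 := by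
    refine sum_hexWeight_le_two fun e he f hf hef => ?_
    simp only [mem_coe, mem_filter, mem_orderedPairs] at he hf
    exact hv.crosses_of_mem_openSegment he.1 hf.1 hef (hb e (mem_orderedPairs.2 he.1))
      (he.2.trans hf.2.symm ▸ hb f (mem_orderedPairs.2 hf.1))
  have := calc
    20 = ∑ e ∈ orderedPairs 6, hexWeight e := sum_hexWeight_orderedPairs.symm
    _ = ∑ q ∈ (orderedPairs 6).image b, ∑ e ∈ orderedPairs 6 with b e = q, hexWeight e :=
      (sum_fiberwise_of_maps_to (fun e he => mem_image_of_mem b he) _).symm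
    _ ≤ ∑ q ∈ (orderedPairs 6).image b, 2 := sum_le_sum fun q _ => hfiber q
    _ = 2 * #((orderedPairs 6).image b) := by rw [sum_const, smul_eq_mul, mul_comm]
  omega

theorem stmt6 (H X : Finset Pt) (hcard : H.card = 6) (hconv : ConvexPos H)
    (hblock : ∀ u ∈ H, ∀ v ∈ H, u ≠ v → ∃ p ∈ X, p ∈ openSegment ℝ u v) :
    10 ≤ X.card := by
  obtain ⟨v, hvH, hvinj, hv⟩ := hconv.exists_isConvexLabeling (n := 5) hcard
  have : ∀ e ∈ orderedPairs 6, ∃ p ∈ X, p ∈ openSegment ℝ (v e.1) (v e.2) := fun e he =>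
    hblock _ (hvH _) _ (hvH _) (hvinj.ne (mem_orderedPairs.1 he).ne)
  choose! b hbX hb using this
  calc 10 ≤ #((orderedPairs 6).image b) := hv.ten_le_card_image hb
    _ ≤ X.card := card_le_card (image_subset_iff.2 hbX)
end

section
/- Let T be a triangle (three non-collinear points of one color) that is color-empty and 3-color-blocked by a set B inside its convex hull, with no 4 collinear points. If B has no points in the open interior of T (all blocking points lie on the open edges of T), then B has exactly 3 points, one on each edge, and these three points have pairwise distinct colors. -/
open scoped Classical

namespace Stmt16Aux

lemma univ_eq {i j k : Fin 3} (hij : i ≠ j) (hik : i ≠ k) (hjk : j ≠ k) :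
    (Finset.univ : Finset (Fin 3)) = {i, j, k} := by
  symm
  apply Finset.eq_univ_of_card
  rw [Finset.card_insert_of_notMem (by simp [hij, hik]),
      Finset.card_insert_of_notMem (by simp [hjk]), Finset.card_singleton]
  simp

lemma coord_openSeg (P : AffineBasis (Fin 3) ℝ Pt) {i j k : Fin 3}
    (hij : i ≠ j) (hik : i ≠ k) (hjk : j ≠ k) {x : Pt}
    (hx : x ∈ openSegment ℝ (P i) (P j)) :
    0 < P.coord i x ∧ 0 < P.coord j x ∧ P.coord k x = 0 := by
  obtain ⟨a, b, ha, hb, hab, rfl⟩ := hx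
  refine ⟨?_, ?_, ?_⟩ <;>
    simp [Convex.combo_affine_apply hab, AffineBasis.coord_apply,
      hij, hij.symm, hik.symm, hjk.symm] <;> linarith

lemma mem_openSeg_of_coord (P : AffineBasis (Fin 3) ℝ Pt) {i j k : Fin 3}
    (hij : i ≠ j) (hik : i ≠ k) (hjk : j ≠ k) {x : Pt}
    (h0 : 0 ≤ P.coord i x) (h0' : 0 ≤ P.coord j x) (hk : P.coord k x = 0)
    (hxi : x ≠ P i) (hxj : x ≠ P j) : x ∈ openSegment ℝ (P i) (P j) := by
  have hsum := P.sum_coord_apply_eq_one x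
  have h1 : Finset.univ.affineCombination ℝ P (fun l => P.coord l x) = x :=
    P.affineCombination_coord_eq_self x
  rw [Finset.affineCombination_eq_linear_combination _ _ _ hsum] at h1
  rw [univ_eq hij hik hjk] at hsum h1
  rw [Finset.sum_insert (by simp [hij, hik]),
      Finset.sum_insert (by simp [hjk]), Finset.sum_singleton] at hsum h1
  rw [hk] at hsum h1
  rw [zero_smul, add_zero] at h1
  have hsum' : P.coord i x + P.coord j x = 1 := by linarith
  have hi : 0 < P.coord i x := by
    rcases h0.lt_or_eq with h | h
    · exact h
    · exfalso
      apply hxj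
      have hb1 : P.coord j x = 1 := by linarith
      rw [← h1, ← h, hb1, zero_smul, one_smul, zero_add]
  have hj : 0 < P.coord j x := by
    rcases h0'.lt_or_eq with h | h
    · exact h
    · exfalso
      apply hxi
      have hb1 : P.coord i x = 1 := by linarith
      rw [← h1, ← h, hb1, zero_smul, one_smul, add_zero]
  exact ⟨P.coord i x, P.coord j x, hi, hj, hsum', h1⟩

lemma openSeg_subset_interior (P : AffineBasis (Fin 3) ℝ Pt) {x y : Pt}
    (hx : ∀ i, 0 ≤ P.coord i x) (hy : ∀ i, 0 ≤ P.coord i y)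
    (hxy : ∀ i, 0 < P.coord i x ∨ 0 < P.coord i y) :
    openSegment ℝ x y ⊆ interior (convexHull ℝ (Set.range P)) := by
  intro z hz
  rw [P.interior_convexHull]
  intro i
  obtain ⟨a, b, ha, hb, hab, rfl⟩ := hz
  rw [Convex.combo_affine_apply hab, smul_eq_mul, smul_eq_mul]
  rcases hxy i with h | h
  · nlinarith [hy i]
  · nlinarith [hx i]

end Stmt16Aux

open Stmt16Aux in
theorem stmt16 (t1 t2 t3 : Pt) (B : Finset Pt) (c : Pt → ℕ)
    (hT : ¬ Collinear ℝ ({t1, t2, t3} : Set Pt))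
    (hTc : c t1 = c t2 ∧ c t2 = c t3)
    (hBsub : ↑B ⊆ convexHull ℝ ({t1, t2, t3} : Set Pt) \ {t1, t2, t3})
    (hcolors : ∃ k1 k2 k3 : ℕ, ∀ b ∈ B,
      (c b = k1 ∨ c b = k2 ∨ c b = k3) ∧ c b ≠ c t1)
    (hblocks : (∃ b ∈ B, b ∈ openSegment ℝ t1 t2) ∧
      (∃ b ∈ B, b ∈ openSegment ℝ t2 t3) ∧ (∃ b ∈ B, b ∈ openSegment ℝ t3 t1))
    (h3 : AtMost3Collinear (({t1, t2, t3} : Finset Pt) ∪ B))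
    (hproper : ProperColoring (({t1, t2, t3} : Finset Pt) ∪ B) c)
    (hnoint : ∀ b ∈ B, b ∉ interior (convexHull ℝ ({t1, t2, t3} : Set Pt))) :
    B.card = 3 ∧
    ∃ b1 b2 b3 : Pt, B = ({b1, b2, b3} : Finset Pt) ∧
      b1 ∈ openSegment ℝ t1 t2 ∧ b2 ∈ openSegment ℝ t2 t3 ∧
      b3 ∈ openSegment ℝ t3 t1 ∧
      c b1 ≠ c b2 ∧ c b2 ≠ c b3 ∧ c b1 ≠ c b3 := by
  classical
  -- basic distinctness of vertices
  have hind : AffineIndependent ℝ ![t1, t2, t3] :=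
    affineIndependent_iff_not_collinear_set.mpr hT
  have htot : affineSpan ℝ (Set.range ![t1, t2, t3]) = ⊤ := by
    rw [hind.affineSpan_eq_top_iff_card_eq_finrank_add_one]
    simp
  set P : AffineBasis (Fin 3) ℝ Pt := ⟨![t1, t2, t3], hind, htot⟩ with hPdef
  have hP0 : P 0 = t1 := rfl
  have hP1 : P 1 = t2 := rfl
  have hP2 : P 2 = t3 := rfl
  have hrange : Set.range (P : Fin 3 → Pt) = ({t1, t2, t3} : Set Pt) := by
    show Set.range ![t1, t2, t3] = _
    ext z
    simp [Matrix.range_cons, Matrix.range_empty]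
    tauto
  -- membership of B points in stuff
  have hBv : ∀ b ∈ B, b ≠ t1 ∧ b ≠ t2 ∧ b ≠ t3 := by
    intro b hb
    have := (hBsub hb).2
    simp only [Set.mem_insert_iff, Set.mem_singleton_iff, not_or] at this
    exact this
  have hBco : ∀ b ∈ B, ∀ i, 0 ≤ P.coord i b := by
    intro b hb
    have h := (hBsub hb).1
    rw [← hrange, P.convexHull_eq_nonneg_coord] at h
    exact h
  -- positivity patterns for points on the three open edges
  have hco12 : ∀ x ∈ openSegment ℝ t1 t2,
      0 < P.coord 0 x ∧ 0 < P.coord 1 x ∧ P.coord 2 x = 0 := by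
    intro x hx
    exact coord_openSeg P (by decide) (by decide) (by decide) (by rwa [hP0, hP1])
  have hco23 : ∀ x ∈ openSegment ℝ t2 t3,
      0 < P.coord 1 x ∧ 0 < P.coord 2 x ∧ P.coord 0 x = 0 := by
    intro x hx
    exact coord_openSeg P (by decide) (by decide) (by decide) (by rwa [hP1, hP2])
  have hco31 : ∀ x ∈ openSegment ℝ t3 t1,
      0 < P.coord 2 x ∧ 0 < P.coord 0 x ∧ P.coord 1 x = 0 := by
    intro x hx
    exact coord_openSeg P (by decide) (by decide) (by decide) (by rwa [hP2, hP0])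
  -- every blocker is on one of the three open edges
  have hedge : ∀ b ∈ B, b ∈ openSegment ℝ t1 t2 ∨ b ∈ openSegment ℝ t2 t3 ∨
      b ∈ openSegment ℝ t3 t1 := by
    intro b hb
    have hco := hBco b hb
    obtain ⟨hbt1, hbt2, hbt3⟩ := hBv b hb
    have hnb : ¬ ∀ i, 0 < P.coord i b := by
      intro h
      apply hnoint b hb
      rw [← hrange, P.interior_convexHull]
      exact h
    push_neg at hnb
    obtain ⟨i, hi⟩ := hnb
    have hi0 : P.coord i b = 0 := le_antisymm hi (hco i)
    fin_cases i
    · right; left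
      rw [← hP1, ← hP2]
      exact mem_openSeg_of_coord P (by decide) (by decide) (by decide)
        (hco 1) (hco 2) hi0 (by rwa [hP1]) (by rwa [hP2])
    · right; right
      rw [← hP2, ← hP0]
      exact mem_openSeg_of_coord P (by decide) (by decide) (by decide)
        (hco 2) (hco 0) hi0 (by rwa [hP2]) (by rwa [hP0])
    · left
      rw [← hP0, ← hP1]
      exact mem_openSeg_of_coord P (by decide) (by decide) (by decide)
        (hco 0) (hco 1) hi0 (by rwa [hP0]) (by rwa [hP1])
  -- uniqueness of the blocker on each edge
  have huniq : ∀ u v : Pt, u ∈ ({t1, t2, t3} : Finset Pt) → v ∈ ({t1, t2, t3} : Finset Pt) →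
      ∀ x ∈ B, ∀ y ∈ B, x ∈ openSegment ℝ u v → y ∈ openSegment ℝ u v → x = y := by
    intro u v hu hv x hx y hy hxs hys
    by_contra hne
    have huS : u ∈ ({t1, t2, t3} : Set Pt) := by
      simpa using hu
    have hvS : v ∈ ({t1, t2, t3} : Set Pt) := by
      simpa using hv
    have hxu : x ≠ u := fun h => (hBsub hx).2 (h ▸ huS)
    have hxv : x ≠ v := fun h => (hBsub hx).2 (h ▸ hvS)
    have hyu : y ≠ u := fun h => (hBsub hy).2 (h ▸ huS)
    have hyv : y ≠ v := fun h => (hBsub hy).2 (h ▸ hvS)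
    have huv : u ≠ v := by
      rintro rfl
      rw [openSegment_same] at hxs
      exact hxu hxs
    have hxl : x ∈ line[ℝ, u, v] := by
      rw [openSegment_eq_image_lineMap] at hxs
      obtain ⟨a, _, rfl⟩ := hxs
      exact AffineMap.lineMap_mem_affineSpan_pair a u v
    have hyl : y ∈ line[ℝ, u, v] := by
      rw [openSegment_eq_image_lineMap] at hys
      obtain ⟨a, _, rfl⟩ := hys
      exact AffineMap.lineMap_mem_affineSpan_pair a u v
    have hcol : Collinear ℝ ({x, y, u, v} : Set Pt) :=
      collinear_insert_insert_of_mem_affineSpan_pair hxl hyl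
    have hsub : ({x, y, u, v} : Finset Pt) ⊆ ({t1, t2, t3} : Finset Pt) ∪ B := by
      intro z hz
      simp only [Finset.mem_insert, Finset.mem_singleton] at hz
      rcases hz with rfl | rfl | rfl | rfl
      · exact Finset.mem_union_right _ hx
      · exact Finset.mem_union_right _ hy
      · exact Finset.mem_union_left _ hu
      · exact Finset.mem_union_left _ hv
    have hcard : ({x, y, u, v} : Finset Pt).card = 4 := by
      rw [Finset.card_insert_of_notMem (by simp [hne, hxu, hxv]),
          Finset.card_insert_of_notMem (by simp [hyu, hyv]),
          Finset.card_insert_of_notMem (by simp [huv]), Finset.card_singleton]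
    have := h3 _ hsub (by simpa using hcol)
    omega
  -- the three blockers
  obtain ⟨⟨b1, hb1B, hb1⟩, ⟨b2, hb2B, hb2⟩, ⟨b3, hb3B, hb3⟩⟩ := hblocks
  obtain ⟨hc1a, hc1b, hc1c⟩ := hco12 b1 hb1
  obtain ⟨hc2a, hc2b, hc2c⟩ := hco23 b2 hb2
  obtain ⟨hc3a, hc3b, hc3c⟩ := hco31 b3 hb3
  have hne12 : b1 ≠ b2 := by
    intro h; rw [h] at hc1a; rw [hc2c] at hc1a; exact lt_irrefl _ hc1a
  have hne23 : b2 ≠ b3 := by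
    intro h; rw [h] at hc2a; rw [hc3c] at hc2a; exact lt_irrefl _ hc2a
  have hne13 : b1 ≠ b3 := by
    intro h; rw [h] at hc1b; rw [hc3c] at hc1b; exact lt_irrefl _ hc1b
  -- B = {b1, b2, b3}
  have hmem1 : t1 ∈ ({t1, t2, t3} : Finset Pt) := by simp
  have hmem2 : t2 ∈ ({t1, t2, t3} : Finset Pt) := by simp
  have hmem3 : t3 ∈ ({t1, t2, t3} : Finset Pt) := by simp
  have hBeq : B = ({b1, b2, b3} : Finset Pt) := by
    apply Finset.Subset.antisymm
    · intro b hb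
      rcases hedge b hb with h | h | h
      · have := huniq t1 t2 hmem1 hmem2 b hb b1 hb1B h hb1
        simp [this]
      · have := huniq t2 t3 hmem2 hmem3 b hb b2 hb2B h hb2
        simp [this]
      · have := huniq t3 t1 hmem3 hmem1 b hb b3 hb3B h hb3
        simp [this]
    · intro b hb
      simp only [Finset.mem_insert, Finset.mem_singleton] at hb
      rcases hb with rfl | rfl | rfl
      · exact hb1B
      · exact hb2B
      · exact hb3B
  have hcard : B.card = 3 := by
    rw [hBeq, Finset.card_insert_of_notMem (by simp [hne12, hne13]),
        Finset.card_insert_of_notMem (by simp [hne23]), Finset.card_singleton]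
  -- visibility of blockers on distinct edges
  have hvert_not : ∀ i : Fin 3, P i ∉ interior (convexHull ℝ (Set.range (P : Fin 3 → Pt))) := by
    intro i hi
    rw [P.interior_convexHull] at hi
    fin_cases i
    · have := hi 1
      rw [AffineBasis.coord_apply, if_neg (by decide)] at this
      exact lt_irrefl _ this
    · have := hi 0
      rw [AffineBasis.coord_apply, if_neg (by decide)] at this
      exact lt_irrefl _ this
    · have := hi 0
      rw [AffineBasis.coord_apply, if_neg (by decide)] at this
      exact lt_irrefl _ this
  have hvis : ∀ x ∈ B, ∀ y ∈ B, (∀ i, 0 < P.coord i x ∨ 0 < P.coord i y) →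
      x ≠ y → c x ≠ c y := by
    intro x hx y hy hpos hne heq
    obtain ⟨p, hpX, hp⟩ := hproper x (Finset.mem_union_right _ hx) y
      (Finset.mem_union_right _ hy) hne heq
    have hpint : p ∈ interior (convexHull ℝ (Set.range (P : Fin 3 → Pt))) :=
      openSeg_subset_interior P (hBco x hx) (hBco y hy) hpos hp
    rcases Finset.mem_union.mp hpX with h | h
    · simp only [Finset.mem_insert, Finset.mem_singleton] at h
      rcases h with rfl | rfl | rfl
      · exact hvert_not 0 (by rwa [hP0])
      · exact hvert_not 1 (by rwa [hP1])
      · exact hvert_not 2 (by rwa [hP2])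
    · exact hnoint p h (by rwa [← hrange])
  have hc12 : c b1 ≠ c b2 := by
    apply hvis b1 hb1B b2 hb2B ?_ hne12
    intro i
    fin_cases i
    · exact Or.inl hc1a
    · exact Or.inl hc1b
    · exact Or.inr hc2b
  have hc23 : c b2 ≠ c b3 := by
    apply hvis b2 hb2B b3 hb3B ?_ hne23
    intro i
    fin_cases i
    · exact Or.inr hc3b
    · exact Or.inl hc2a
    · exact Or.inl hc2b
  have hc13 : c b1 ≠ c b3 := by
    apply hvis b1 hb1B b3 hb3B ?_ hne13
    intro i
    fin_cases i
    · exact Or.inl hc1a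
    · exact Or.inl hc1b
    · exact Or.inr hc3a
  exact ⟨hcard, b1, b2, b3, hBeq, hb1, hb2, hb3, hc12, hc23, hc13⟩
end

section
/- Let T be a unicolored, color-empty triangle that is 3-color-blocked by a set B with exactly one point p in the interior of T, with no 4 collinear points. Then p has a color not used by any other point of B, B has exactly 4 points (one on each edge plus p), two of the edge points share a color and are blocked by p, and the third edge point has the remaining color. -/
open scoped Classical

lemma mem_line_of_openSegment {x y q : Pt} (h : q ∈ openSegment ℝ x y) :
    q ∈ line[ℝ, x, y] := by
  have := openSegment_subset_segment ℝ x y h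
  rw [← convexHull_pair] at this
  exact convexHull_subset_affineSpan _ this

lemma exists_tri_basis (x y z : Pt) (h : ¬ Collinear ℝ ({x, y, z} : Set Pt)) :
    ∃ b : AffineBasis (Fin 3) ℝ Pt, b 0 = x ∧ b 1 = y ∧ b 2 = z ∧
      (∀ q, q ∈ convexHull ℝ ({x, y, z} : Set Pt) ↔ ∀ i, 0 ≤ b.coord i q) ∧
      (∀ q, q ∈ interior (convexHull ℝ ({x, y, z} : Set Pt)) ↔ ∀ i, 0 < b.coord i q) := by
  have hrange : Set.range ![x, y, z] = ({x, y, z} : Set Pt) := by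
    ext w; simp [Fin.exists_fin_two, Fin.exists_fin_succ]; tauto
  have hai : AffineIndependent ℝ ![x, y, z] := by
    rw [affineIndependent_iff_not_collinear, hrange]; exact h
  have htop : affineSpan ℝ (Set.range ![x, y, z]) = ⊤ := by
    rw [hai.affineSpan_eq_top_iff_card_eq_finrank_add_one]
    simp
  refine ⟨⟨![x, y, z], hai, htop⟩, rfl, rfl, rfl, ?_, ?_⟩
  · intro q
    have := AffineBasis.convexHull_eq_nonneg_coord (⟨![x, y, z], hai, htop⟩ : AffineBasis (Fin 3) ℝ Pt)
    rw [show Set.range (⟨![x,y,z], hai, htop⟩ : AffineBasis (Fin 3) ℝ Pt) = ({x,y,z} : Set Pt) from hrange] at this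
    rw [this]; rfl
  · intro q
    have := AffineBasis.interior_convexHull (⟨![x, y, z], hai, htop⟩ : AffineBasis (Fin 3) ℝ Pt)
    rw [show Set.range (⟨![x,y,z], hai, htop⟩ : AffineBasis (Fin 3) ℝ Pt) = ({x,y,z} : Set Pt) from hrange] at this
    rw [this]; rfl

lemma coord_of_openSegment (b : AffineBasis (Fin 3) ℝ Pt) {x y q : Pt}
    (hq : q ∈ openSegment ℝ x y) (i : Fin 3) :
    b.coord i q ∈ openSegment ℝ (b.coord i x) (b.coord i y) := by
  rw [← image_openSegment ℝ (b.coord i) x y]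
  exact Set.mem_image_of_mem _ hq

lemma real_os {r s z : ℝ} (h : z ∈ openSegment ℝ r s) :
    ∃ a c : ℝ, 0 < a ∧ 0 < c ∧ a + c = 1 ∧ z = a * r + c * s := by
  obtain ⟨a, c, ha, hc, hac, h⟩ := h
  exact ⟨a, c, ha, hc, hac, by rw [← h]; simp [smul_eq_mul]⟩

lemma real_openSegment_pos {x y z : ℝ} (hx : 0 ≤ x) (hy : 0 ≤ y) (hxy : 0 < x ∨ 0 < y)
    (hz : z ∈ openSegment ℝ x y) : 0 < z := by
  obtain ⟨a, c, ha, hc, hac, he⟩ := real_os hz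
  rcases hxy with h | h
  · nlinarith
  · nlinarith

/-- forward characterization of the (x,y) edge in a basis ⟨x,y,z⟩ -/
lemma edge01_coords (b : AffineBasis (Fin 3) ℝ Pt) {q : Pt}
    (hq : q ∈ openSegment ℝ (b 0) (b 1)) :
    0 < b.coord 0 q ∧ 0 < b.coord 1 q ∧ b.coord 2 q = 0 := by
  have h0 := coord_of_openSegment b hq 0
  have h1 := coord_of_openSegment b hq 1
  have h2 := coord_of_openSegment b hq 2
  simp only [AffineBasis.coord_apply] at h0 h1 h2
  simp only [show ((0:Fin 3) = 1) = False by decide, show ((1:Fin 3) = 0) = False by decide,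
    show ((2:Fin 3) = 0) = False by decide, show ((2:Fin 3) = 1) = False by decide,
    if_true, if_false] at h0 h1 h2
  obtain ⟨a0, c0, ha0, hc0, hs0, he0⟩ := real_os h0
  obtain ⟨a1, c1, ha1, hc1, hs1, he1⟩ := real_os h1
  obtain ⟨a2, c2, ha2, hc2, hs2, he2⟩ := real_os h2
  refine ⟨by nlinarith, by nlinarith, by nlinarith⟩

lemma coord_zero_of_edge (b : AffineBasis (Fin 3) ℝ Pt) {i j k : Fin 3} (hij : i ≠ j)
    (hik : i ≠ k) {q : Pt} (hq : q ∈ openSegment ℝ (b j) (b k)) : b.coord i q = 0 := by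
  have h := coord_of_openSegment b hq i
  rw [AffineBasis.coord_apply, AffineBasis.coord_apply, if_neg hij, if_neg hik,
    openSegment_same] at h
  exact h

lemma coord_pos_of_edge (b : AffineBasis (Fin 3) ℝ Pt) {i j k : Fin 3} (h : i = j ∨ i = k)
    {q : Pt} (hq : q ∈ openSegment ℝ (b j) (b k)) : 0 < b.coord i q := by
  have hh := coord_of_openSegment b hq i
  rw [AffineBasis.coord_apply, AffineBasis.coord_apply] at hh
  obtain ⟨a, c, ha, hc, hac, he⟩ := real_os hh
  have e1 : (0:ℝ) ≤ if i = j then 1 else 0 := by split <;> norm_num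
  have e2 : (0:ℝ) ≤ if i = k then 1 else 0 := by split <;> norm_num
  rcases h with h | h
  · rw [he]; have : (if i = j then (1:ℝ) else 0) = 1 := if_pos h
    nlinarith
  · rw [he]; have : (if i = k then (1:ℝ) else 0) = 1 := if_pos h
    nlinarith

lemma edge_of_coords (b : AffineBasis (Fin 3) ℝ Pt) {i j k : Fin 3}
    (hperm : ∀ l : Fin 3, l = i ∨ l = j ∨ l = k) (hij : i ≠ j) (hik : i ≠ k) (hjk : j ≠ k)
    {q : Pt} (h0 : ∀ l, 0 ≤ b.coord l q) (hk : b.coord k q = 0)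
    (hx : q ≠ b i) (hy : q ≠ b j) : q ∈ openSegment ℝ (b i) (b j) := by
  have huniv : (Finset.univ : Finset (Fin 3)) = {i, j, k} := by
    refine (Finset.eq_univ_of_forall fun l => ?_).symm
    rcases hperm l with h | h | h <;> simp [h]
  have hijk : i ∉ ({j, k} : Finset (Fin 3)) := by simp [hij, hik]
  have hjk' : j ∉ ({k} : Finset (Fin 3)) := by simp [hjk]
  have hsum : b.coord i q + b.coord j q + b.coord k q = 1 := by
    have h := b.sum_coord_apply_eq_one q
    rw [huniv, Finset.sum_insert hijk, Finset.sum_insert hjk', Finset.sum_singleton] at h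
    linarith
  have hrep : b.coord i q • b i + b.coord j q • b j + b.coord k q • b k = q := by
    have h := b.linear_combination_coord_eq_self q
    rw [huniv, Finset.sum_insert hijk, Finset.sum_insert hjk', Finset.sum_singleton] at h
    rw [add_assoc]; exact h
  have hipos : 0 < b.coord i q := by
    rcases (h0 i).lt_or_eq with h | h
    · exact h
    · exfalso; apply hy; apply b.ext_elem; intro l
      rcases hperm l with hl | hl | hl <;> subst hl <;>
        rw [AffineBasis.coord_apply]
      · rw [if_neg hij]; linarith
      · rw [if_pos rfl]; linarith
      · rw [if_neg (Ne.symm hjk)]; linarith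
  have hjpos : 0 < b.coord j q := by
    rcases (h0 j).lt_or_eq with h | h
    · exact h
    · exfalso; apply hx; apply b.ext_elem; intro l
      rcases hperm l with hl | hl | hl <;> subst hl <;>
        rw [AffineBasis.coord_apply]
      · rw [if_pos rfl]; linarith
      · rw [if_neg (Ne.symm hij)]; linarith
      · rw [if_neg (Ne.symm hik)]; linarith
  refine ⟨b.coord i q, b.coord j q, hipos, hjpos, by linarith, ?_⟩
  rw [hk, zero_smul, add_zero] at hrep
  exact hrep

lemma tri_decomp {x y z : Pt} (h : ¬ Collinear ℝ ({x, y, z} : Set Pt)) {q : Pt}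
    (hq : q ∈ convexHull ℝ ({x, y, z} : Set Pt))
    (hqi : q ∉ interior (convexHull ℝ ({x, y, z} : Set Pt)))
    (hx : q ≠ x) (hy : q ≠ y) (hz : q ≠ z) :
    q ∈ openSegment ℝ x y ∨ q ∈ openSegment ℝ y z ∨ q ∈ openSegment ℝ z x := by
  obtain ⟨b, hb0, hb1, hb2, hhull, hint⟩ := exists_tri_basis x y z h
  have h0 : ∀ i, 0 ≤ b.coord i q := (hhull q).1 hq
  have : ¬ ∀ i, 0 < b.coord i q := fun hh => hqi ((hint q).2 hh)
  push_neg at this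
  obtain ⟨i, hi⟩ := this
  have hiz : b.coord i q = 0 := le_antisymm hi (h0 i)
  have hx' : q ≠ b 0 := hb0 ▸ hx
  have hy' : q ≠ b 1 := hb1 ▸ hy
  have hz' : q ≠ b 2 := hb2 ▸ hz
  fin_cases i
  · right; left
    rw [← hb1, ← hb2]
    exact edge_of_coords b (by decide) (by decide) (by decide) (by decide) h0 hiz hy' hz'
  · right; right
    rw [← hb2, ← hb0]
    exact edge_of_coords b (by decide) (by decide) (by decide) (by decide) h0 hiz hz' hx'
  · left
    rw [← hb0, ← hb1]
    exact edge_of_coords b (by decide) (by decide) (by decide) (by decide) h0 hiz hx' hy'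

lemma edge_not_interior {x y z : Pt} (h : ¬ Collinear ℝ ({x, y, z} : Set Pt)) {q : Pt}
    (hq : q ∈ openSegment ℝ x y) : q ∉ interior (convexHull ℝ ({x, y, z} : Set Pt)) := by
  obtain ⟨b, hb0, hb1, hb2, hhull, hint⟩ := exists_tri_basis x y z h
  rw [← hb0, ← hb1] at hq
  intro hqi
  have := coord_zero_of_edge b (i := 2) (by decide) (by decide) hq
  have := (hint q).1 hqi 2
  linarith

lemma vertex_not_interior {x y z : Pt} (h : ¬ Collinear ℝ ({x, y, z} : Set Pt)) :
    x ∉ interior (convexHull ℝ ({x, y, z} : Set Pt)) := by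
  obtain ⟨b, hb0, hb1, hb2, hhull, hint⟩ := exists_tri_basis x y z h
  intro hqi
  have h1 := (hint x).1 hqi 1
  rw [← hb0, AffineBasis.coord_apply, if_neg (by decide : (1 : Fin 3) ≠ 0)] at h1
  linarith

lemma edge_disjoint_adj {x y z : Pt} (h : ¬ Collinear ℝ ({x, y, z} : Set Pt)) {q : Pt}
    (hq : q ∈ openSegment ℝ x y) : q ∉ openSegment ℝ y z := by
  obtain ⟨b, hb0, hb1, hb2, hhull, hint⟩ := exists_tri_basis x y z h
  rw [← hb0, ← hb1] at hq
  intro hq2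
  rw [← hb1, ← hb2] at hq2
  have h1 := coord_pos_of_edge b (i := 0) (Or.inl rfl) hq
  have h2 := coord_zero_of_edge b (i := 0) (by decide) (by decide) hq2
  linarith

lemma seg_edge_edge_interior {x y z : Pt} (h : ¬ Collinear ℝ ({x, y, z} : Set Pt)) {u v : Pt}
    (hu : u ∈ openSegment ℝ x y) (hv : v ∈ openSegment ℝ y z) :
    openSegment ℝ u v ⊆ interior (convexHull ℝ ({x, y, z} : Set Pt)) := by
  obtain ⟨b, hb0, hb1, hb2, hhull, hint⟩ := exists_tri_basis x y z h
  rw [← hb0, ← hb1] at hu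
  rw [← hb1, ← hb2] at hv
  intro q hq
  rw [hint q]
  intro i
  have hqi := coord_of_openSegment b hq i
  fin_cases i
  · exact real_openSegment_pos (le_of_lt (coord_pos_of_edge b (Or.inl rfl) hu))
      (le_of_eq (coord_zero_of_edge b (by decide) (by decide) hv).symm)
      (Or.inl (coord_pos_of_edge b (Or.inl rfl) hu)) hqi
  · exact real_openSegment_pos (le_of_lt (coord_pos_of_edge b (Or.inr rfl) hu))
      (le_of_lt (coord_pos_of_edge b (Or.inl rfl) hv))
      (Or.inl (coord_pos_of_edge b (Or.inr rfl) hu)) hqi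
  · exact real_openSegment_pos (le_of_eq (coord_zero_of_edge b (by decide) (by decide) hu).symm)
      (le_of_lt (coord_pos_of_edge b (Or.inr rfl) hv))
      (Or.inr (coord_pos_of_edge b (Or.inr rfl) hv)) hqi


lemma card_four {a b c d : Pt} (hab : a ≠ b) (hac : a ≠ c) (had : a ≠ d) (hbc : b ≠ c)
    (hbd : b ≠ d) (hcd : c ≠ d) : ({a, b, c, d} : Finset Pt).card = 4 := by
  rw [Finset.card_insert_of_notMem (by simp [hab, hac, had]),
    Finset.card_insert_of_notMem (by simp [hbc, hbd]),
    Finset.card_insert_of_notMem (by simp [hcd]), Finset.card_singleton]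

set_option maxHeartbeats 1000000 in
theorem stmt17 (t1 t2 t3 p : Pt) (B : Finset Pt) (c : Pt → ℕ)
    (hT : ¬ Collinear ℝ ({t1, t2, t3} : Set Pt))
    (hTc : c t1 = c t2 ∧ c t2 = c t3)
    (hBsub : ↑B ⊆ convexHull ℝ ({t1, t2, t3} : Set Pt) \ {t1, t2, t3})
    (hcolors : ∃ k1 k2 k3 : ℕ, ∀ b ∈ B,
      (c b = k1 ∨ c b = k2 ∨ c b = k3) ∧ c b ≠ c t1)
    (hblocks : (∃ b ∈ B, b ∈ openSegment ℝ t1 t2) ∧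
      (∃ b ∈ B, b ∈ openSegment ℝ t2 t3) ∧ (∃ b ∈ B, b ∈ openSegment ℝ t3 t1))
    (h3 : AtMost3Collinear (({t1, t2, t3} : Finset Pt) ∪ B))
    (hproper : ProperColoring (({t1, t2, t3} : Finset Pt) ∪ B) c)
    (hp : p ∈ B) (hpint : p ∈ interior (convexHull ℝ ({t1, t2, t3} : Set Pt)))
    (hponly : ∀ q ∈ B, q ∈ interior (convexHull ℝ ({t1, t2, t3} : Set Pt)) → q = p) :
    B.card = 4 ∧ (∀ q ∈ B, q ≠ p → c q ≠ c p) ∧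
    ∃ u v w : Pt, B = ({u, v, w, p} : Finset Pt) ∧
      u ∈ openSegment ℝ t1 t2 ∧ v ∈ openSegment ℝ t2 t3 ∧
      w ∈ openSegment ℝ t3 t1 ∧
      ∃ a b d : Pt, ({a, b, d} : Set Pt) = ({u, v, w} : Set Pt) ∧
        c a = c b ∧ p ∈ openSegment ℝ a b ∧
        c d ≠ c a ∧ c d ≠ c p ∧ c a ≠ c p := by
  obtain ⟨⟨u, huB, hu⟩, ⟨v, hvB, hv⟩, ⟨w, hwB, hw⟩⟩ := hblocks
  set X := ({t1, t2, t3} : Finset Pt) ∪ B with hX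
  have hset1 : ({t2, t3, t1} : Set Pt) = {t1, t2, t3} := by ext m; simp; tauto
  have hset2 : ({t3, t1, t2} : Set Pt) = {t1, t2, t3} := by ext m; simp; tauto
  have hT2 : ¬ Collinear ℝ ({t2, t3, t1} : Set Pt) := by rw [hset1]; exact hT
  have hT3 : ¬ Collinear ℝ ({t3, t1, t2} : Set Pt) := by rw [hset2]; exact hT
  have h12 : t1 ≠ t2 := by
    rintro rfl
    exact hT (by rw [show ({t1,t1,t3} : Set Pt) = {t1,t3} by ext m; simp]
                 exact collinear_pair ℝ _ _)
  have h23 : t2 ≠ t3 := by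
    rintro rfl
    exact hT (by rw [show ({t1,t2,t2} : Set Pt) = {t1,t2} by ext m; simp]
                 exact collinear_pair ℝ _ _)
  have h31 : t3 ≠ t1 := by
    rintro rfl
    exact hT (by rw [show ({t3,t2,t3} : Set Pt) = {t3,t2} by ext m; simp; tauto]
                 exact collinear_pair ℝ _ _)
  -- basic facts about B points
  have hBhull : ∀ q ∈ B, q ∈ convexHull ℝ ({t1, t2, t3} : Set Pt) := fun q hq => (hBsub hq).1
  have hBne : ∀ q ∈ B, q ≠ t1 ∧ q ≠ t2 ∧ q ≠ t3 := by
    intro q hq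
    have := (hBsub hq).2
    simp only [Set.mem_insert_iff, Set.mem_singleton_iff] at this
    tauto
  -- edge points are not interior
  have hu_ni : u ∉ interior (convexHull ℝ ({t1, t2, t3} : Set Pt)) := edge_not_interior hT hu
  have hv_ni : v ∉ interior (convexHull ℝ ({t1, t2, t3} : Set Pt)) := by
    have := edge_not_interior hT2 hv; rwa [hset1] at this
  have hw_ni : w ∉ interior (convexHull ℝ ({t1, t2, t3} : Set Pt)) := by
    have := edge_not_interior hT3 hw; rwa [hset2] at this
  have hpu : p ≠ u := fun e => hu_ni (e ▸ hpint)
  have hpv : p ≠ v := fun e => hv_ni (e ▸ hpint)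
  have hpw : p ≠ w := fun e => hw_ni (e ▸ hpint)
  have huv : u ≠ v := fun e => (edge_disjoint_adj hT hu) (e ▸ hv)
  have hvw : v ≠ w := fun e => (edge_disjoint_adj hT2 hv) (e ▸ hw)
  have hwu : w ≠ u := fun e => (edge_disjoint_adj hT3 hw) (e ▸ hu)
  -- membership in X
  have hXB : ∀ q ∈ B, q ∈ X := fun q hq => Finset.mem_union_right _ hq
  -- the only point of X in the interior is p
  have hIX : ∀ m ∈ X, m ∈ interior (convexHull ℝ ({t1, t2, t3} : Set Pt)) → m = p := by
    intro m hm hmi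
    rw [hX, Finset.mem_union] at hm
    rcases hm with hm | hm
    · exfalso
      simp only [Finset.mem_insert, Finset.mem_singleton] at hm
      rcases hm with rfl | rfl | rfl
      · exact vertex_not_interior hT hmi
      · exact vertex_not_interior hT2 (by rwa [hset1])
      · exact vertex_not_interior hT3 (by rwa [hset2])
    · exact hponly m hm hmi
  -- color claim
  have hc2 : ∀ q ∈ B, q ≠ p → c q ≠ c p := by
    intro q hq hqp hcq
    obtain ⟨m, hmX, hm⟩ := hproper q (hXB q hq) p (hXB p hp) hqp hcq
    have hmi : m ∈ interior (convexHull ℝ ({t1, t2, t3} : Set Pt)) :=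
      (convex_convexHull ℝ _).openSegment_self_interior_subset_interior (hBhull q hq) hpint hm
    have := hIX m hmX hmi
    subst this
    rw [right_mem_openSegment_iff] at hm
    exact hqp hm
  -- uniqueness of edge points
  have huniq : ∀ x y u' : Pt, x ≠ y → u' ∈ openSegment ℝ x y → u' ∈ B →
      x ∈ X → y ∈ X → ∀ q ∈ B, q ∈ openSegment ℝ x y → q ≠ t1 → q ≠ t2 → q ≠ t3 →
      u' ≠ t1 → u' ≠ t2 → u' ≠ t3 → x = t1 ∨ x = t2 ∨ x = t3 → y = t1 ∨ y = t2 ∨ y = t3 →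
      q = u' := by
    intro x y u' hxy hu' hu'B hxX hyX q hqB hq hq1 hq2 hq3 hu1 hu2 hu3 hxT hyT
    by_contra hne
    have hcol : Collinear ℝ ({q, u', x, y} : Set Pt) :=
      collinear_insert_insert_of_mem_affineSpan_pair (mem_line_of_openSegment hq)
        (mem_line_of_openSegment hu')
    have hsub : ({q, u', x, y} : Finset Pt) ⊆ X := by
      intro m hm
      simp only [Finset.mem_insert, Finset.mem_singleton] at hm
      rcases hm with rfl | rfl | rfl | rfl
      · exact hXB m hqB
      · exact hXB m hu'B
      · exact hxX
      · exact hyX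
    have hcard := h3 {q, u', x, y} hsub (by push_cast; exact hcol)
    have hqx : q ≠ x := by rcases hxT with rfl | rfl | rfl <;> assumption
    have hqy : q ≠ y := by rcases hyT with rfl | rfl | rfl <;> assumption
    have hux : u' ≠ x := by rcases hxT with rfl | rfl | rfl <;> assumption
    have huy : u' ≠ y := by rcases hyT with rfl | rfl | rfl <;> assumption
    rw [card_four hne hqx hqy hux huy hxy] at hcard
    omega
  have ht1X : t1 ∈ X := Finset.mem_union_left _ (by simp)
  have ht2X : t2 ∈ X := Finset.mem_union_left _ (by simp)
  have ht3X : t3 ∈ X := Finset.mem_union_left _ (by simp)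
  obtain ⟨hu1, hu2, hu3⟩ := hBne u huB
  obtain ⟨hv1, hv2, hv3⟩ := hBne v hvB
  obtain ⟨hw1, hw2, hw3⟩ := hBne w hwB
  have hmem : ∀ q ∈ B, q = u ∨ q = v ∨ q = w ∨ q = p := by
    intro q hqB
    obtain ⟨hq1, hq2, hq3⟩ := hBne q hqB
    by_cases hqi : q ∈ interior (convexHull ℝ ({t1, t2, t3} : Set Pt))
    · exact Or.inr (Or.inr (Or.inr (hponly q hqB hqi)))
    rcases tri_decomp hT (hBhull q hqB) hqi hq1 hq2 hq3 with h | h | h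
    · exact Or.inl (huniq t1 t2 u h12 hu huB ht1X ht2X q hqB h hq1 hq2 hq3 hu1 hu2 hu3
        (Or.inl rfl) (Or.inr (Or.inl rfl)))
    · exact Or.inr (Or.inl (huniq t2 t3 v h23 hv hvB ht2X ht3X q hqB h hq1 hq2 hq3 hv1 hv2 hv3
        (Or.inr (Or.inl rfl)) (Or.inr (Or.inr rfl))))
    · exact Or.inr (Or.inr (Or.inl (huniq t3 t1 w h31 hw hwB ht3X ht1X q hqB h hq1 hq2 hq3
        hw1 hw2 hw3 (Or.inr (Or.inr rfl)) (Or.inl rfl))))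
  have hBeq : B = ({u, v, w, p} : Finset Pt) := by
    apply Finset.Subset.antisymm
    · intro q hq
      rcases hmem q hq with rfl | rfl | rfl | rfl <;> simp
    · intro q hq
      simp only [Finset.mem_insert, Finset.mem_singleton] at hq
      rcases hq with rfl | rfl | rfl | rfl <;> assumption
  refine ⟨by rw [hBeq]; exact card_four huv hwu.symm hpu.symm hvw hpv.symm hpw.symm, hc2,
    u, v, w, hBeq, hu, hv, hw, ?_⟩
  have hblock : ∀ a b : Pt, a ∈ B → b ∈ B → a ≠ b →
      openSegment ℝ a b ⊆ interior (convexHull ℝ ({t1, t2, t3} : Set Pt)) →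
      c a = c b → p ∈ openSegment ℝ a b := by
    intro a b haB hbB hab hsub he
    obtain ⟨m, hmX, hm⟩ := hproper a (hXB a haB) b (hXB b hbB) hab he
    have := hIX m hmX (hsub hm)
    subst this
    exact hm
  have hUV' : openSegment ℝ u v ⊆ interior (convexHull ℝ ({t1, t2, t3} : Set Pt)) :=
    seg_edge_edge_interior hT hu hv
  have hVW' : openSegment ℝ v w ⊆ interior (convexHull ℝ ({t1, t2, t3} : Set Pt)) := by
    have := seg_edge_edge_interior hT2 hv hw; rwa [hset1] at this
  have hWU' : openSegment ℝ w u ⊆ interior (convexHull ℝ ({t1, t2, t3} : Set Pt)) := by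
    have := seg_edge_edge_interior hT3 hw hu; rwa [hset2] at this
  have htwo : ∀ a b d : Pt, a ∈ B → b ∈ B → d ∈ B → a ≠ b → b ≠ d → a ≠ d →
      a ≠ p → b ≠ p → d ≠ p → p ∈ openSegment ℝ a b → p ∈ openSegment ℝ b d → False := by
    intro a b d haB hbB hdB hab hbd had hap hbp hdp hp1 hp2
    have h1 : Collinear ℝ ({p, a, b} : Set Pt) :=
      collinear_insert_of_mem_affineSpan_pair (mem_line_of_openSegment hp1)
    have h2 : Collinear ℝ ({p, b, d} : Set Pt) :=
      collinear_insert_of_mem_affineSpan_pair (mem_line_of_openSegment hp2)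
    have ha' : a ∈ line[ℝ, p, b] :=
      h1.mem_affineSpan_of_mem_of_ne (by simp) (by simp) (by simp) (Ne.symm hbp)
    have hd' : d ∈ line[ℝ, p, b] :=
      h2.mem_affineSpan_of_mem_of_ne (by simp) (by simp) (by simp) (Ne.symm hbp)
    have hcol : Collinear ℝ ({a, d, p, b} : Set Pt) :=
      collinear_insert_insert_of_mem_affineSpan_pair ha' hd'
    have hsub : ({a, d, p, b} : Finset Pt) ⊆ X := by
      intro m hm
      simp only [Finset.mem_insert, Finset.mem_singleton] at hm
      rcases hm with rfl | rfl | rfl | rfl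
      · exact hXB m haB
      · exact hXB m hdB
      · exact hXB m hp
      · exact hXB m hbB
    have hcard := h3 {a, d, p, b} hsub (by push_cast; exact hcol)
    rw [card_four had hap hab hdp (Ne.symm hbd) (Ne.symm hbp)] at hcard
    omega
  by_cases e1 : c u = c v
  · by_cases e2 : c v = c w
    · exact absurd (htwo u v w huB hvB hwB huv hvw hwu.symm hpu.symm hpv.symm hpw.symm
        (hblock u v huB hvB huv hUV' e1) (hblock v w hvB hwB hvw hVW' e2)) (fun h => h)
    · exact ⟨u, v, w, rfl, e1, hblock u v huB hvB huv hUV' e1,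
        fun hh => e2 (e1.symm.trans hh.symm), hc2 w hwB hpw.symm, hc2 u huB hpu.symm⟩
  · by_cases e2 : c v = c w
    · exact ⟨v, w, u, by ext m; simp; tauto, e2, hblock v w hvB hwB hvw hVW' e2,
        e1, hc2 u huB hpu.symm, hc2 v hvB hpv.symm⟩
    · by_cases e3 : c u = c w
      · exact ⟨w, u, v, by ext m; simp; tauto, e3.symm, hblock w u hwB huB hwu hWU' e3.symm,
        fun hh => e2 hh, hc2 v hvB hpv.symm, hc2 w hwB hpw.symm⟩
      · exfalso
        obtain ⟨k1, k2, k3, hk⟩ := hcolors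
        have g1 := (hk u huB).1
        have g2 := (hk v hvB).1
        have g3 := (hk w hwB).1
        have g4 := (hk p hp).1
        have d1 := hc2 u huB hpu.symm
        have d2 := hc2 v hvB hpv.symm
        have d3 := hc2 w hwB hpw.symm
        rcases g1 with g | g | g <;> rcases g2 with g | g | g <;>
          rcases g3 with g | g | g <;> rcases g4 with g | g | g <;> omega
end

section
/- Let T be a unicolored, color-empty triangle 3-color-blocked (no 4 collinear points) by a set B with exactly two points i, i' in the interior of T. Then i and i' have different colors, some interior point and some edge point share a color and are blocked by the other interior point, and the remaining two edge points share a color and are blocked by one of i, i'; in particular |B| = 5. -/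
open scoped Classical

theorem segCoord (bb : AffineBasis (Fin 3) ℝ Pt) {u v x : Pt} (hx : x ∈ openSegment ℝ u v) :
    ∃ θ : ℝ, 0 < θ ∧ θ < 1 ∧ ∀ j, bb.coord j x = (1-θ) * bb.coord j u + θ * bb.coord j v := by
  rw [openSegment_eq_image_lineMap] at hx
  obtain ⟨θ, hθ, rfl⟩ := hx
  refine ⟨θ, hθ.1, hθ.2, fun j => ?_⟩
  rw [AffineMap.apply_lineMap, AffineMap.lineMap_apply_module]
  simp [smul_eq_mul]
  try ring

theorem segLine {u v x : Pt} (hx : x ∈ openSegment ℝ u v) : x ∈ line[ℝ, u, v] := by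
  rw [openSegment_eq_image_lineMap] at hx
  obtain ⟨θ, hθ, rfl⟩ := hx
  exact AffineMap.lineMap_mem_affineSpan_pair _ _ _

theorem reprCoord (bb : AffineBasis (Fin 3) ℝ Pt) (x : Pt) :
    x = bb.coord 0 x • bb 0 + bb.coord 1 x • bb 1 + bb.coord 2 x • bb 2 := by
  have h := bb.linear_combination_coord_eq_self x
  rw [Fin.sum_univ_three] at h
  exact h.symm

theorem sumCoord (bb : AffineBasis (Fin 3) ℝ Pt) (x : Pt) :
    bb.coord 0 x + bb.coord 1 x + bb.coord 2 x = 1 := by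
  have h := bb.sum_coord_apply_eq_one x
  rwa [Fin.sum_univ_three] at h

theorem coordComb (bb : AffineBasis (Fin 3) ℝ Pt) {a b c : ℝ} (habc : a + b + c = 1) (j : Fin 3) :
    bb.coord j (a • bb 0 + b • bb 1 + c • bb 2) = ![a,b,c] j := by
  have h := bb.coord_apply_combination_of_mem (Finset.mem_univ j) (w := ![a,b,c])
    (by rw [Fin.sum_univ_three]; simpa using habc)
  rwa [Finset.univ.affineCombination_eq_linear_combination _ _
    (by rw [Fin.sum_univ_three]; simpa using habc), Fin.sum_univ_three] at h

theorem colorlogic1 (x1 x2 x3 y k1 k2 k3 : ℕ) (m1 : x1 = k1 ∨ x1 = k2 ∨ x1 = k3)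
    (m2 : x2 = k1 ∨ x2 = k2 ∨ x2 = k3) (m3 : x3 = k1 ∨ x3 = k2 ∨ x3 = k3)
    (my : y = k1 ∨ y = k2 ∨ y = k3) (h12 : x1 ≠ x2) (h13 : x1 ≠ x3) (h23 : x2 ≠ x3) :
    y = x1 ∨ y = x2 ∨ y = x3 := by omega

theorem colorlogic2 (xs x y y' k1 k2 k3 : ℕ) (ms : xs = k1 ∨ xs = k2 ∨ xs = k3)
    (mx : x = k1 ∨ x = k2 ∨ x = k3) (m_y : y = k1 ∨ y = k2 ∨ y = k3)
    (my' : y' = k1 ∨ y' = k2 ∨ y' = k3) (hxxs : x ≠ xs) (hyy' : y ≠ y')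
    (h1 : y ≠ xs) (h2 : y ≠ x) (h3 : y' ≠ xs) (h4 : y' ≠ x) : False := by omega

/-- four collinear points from two open segments sharing an endpoint -/
theorem col4 {w x y z : Pt} (h1 : w ∈ openSegment ℝ x y) (h2 : w ∈ openSegment ℝ x z)
    (hwx : w ≠ x) : Collinear ℝ ({z, w, x, y} : Set Pt) := by
  have c1 : Collinear ℝ ({w, x, y} : Set Pt) :=
    collinear_insert_of_mem_affineSpan_pair (segLine h1)
  have c2 : Collinear ℝ ({w, x, z} : Set Pt) :=
    collinear_insert_of_mem_affineSpan_pair (segLine h2)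
  have := (c1.collinear_insert_iff_of_ne (p₁ := z)
    (Set.mem_insert _ _) (Set.mem_insert_of_mem _ (Set.mem_insert _ _)) hwx).2
    (c2.subset (by intro q hq; simp at hq ⊢; tauto))
  exact this.subset (by intro q hq; simp at hq ⊢; tauto)

set_option maxHeartbeats 40000000 in
theorem stmt18 (t1 t2 t3 i i' : Pt) (B : Finset Pt) (c : Pt → ℕ)
    (hT : ¬ Collinear ℝ ({t1, t2, t3} : Set Pt))
    (hTc : c t1 = c t2 ∧ c t2 = c t3)
    (hBsub : ↑B ⊆ convexHull ℝ ({t1, t2, t3} : Set Pt) \ {t1, t2, t3})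
    (hcolors : ∃ k1 k2 k3 : ℕ, ∀ b ∈ B,
      (c b = k1 ∨ c b = k2 ∨ c b = k3) ∧ c b ≠ c t1)
    (hblocks : (∃ b ∈ B, b ∈ openSegment ℝ t1 t2) ∧
      (∃ b ∈ B, b ∈ openSegment ℝ t2 t3) ∧ (∃ b ∈ B, b ∈ openSegment ℝ t3 t1))
    (h3 : AtMost3Collinear (({t1, t2, t3} : Finset Pt) ∪ B))
    (hproper : ProperColoring (({t1, t2, t3} : Finset Pt) ∪ B) c)
    (hi : i ∈ B) (hi' : i' ∈ B) (hii' : i ≠ i')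
    (hiint : i ∈ interior (convexHull ℝ ({t1, t2, t3} : Set Pt)))
    (hi'int : i' ∈ interior (convexHull ℝ ({t1, t2, t3} : Set Pt)))
    (honly : ∀ q ∈ B, q ∈ interior (convexHull ℝ ({t1, t2, t3} : Set Pt)) →
      q = i ∨ q = i') :
    B.card = 5 ∧ c i ≠ c i' ∧
    ∃ b1 b2 b3 : Pt, B = ({b1, b2, b3, i, i'} : Finset Pt) ∧
      b1 ∈ openSegment ℝ t1 t2 ∧ b2 ∈ openSegment ℝ t2 t3 ∧
      b3 ∈ openSegment ℝ t3 t1 ∧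
      ∃ a a' : Pt, ({a, a'} : Set Pt) = ({i, i'} : Set Pt) ∧
        ∃ s ∈ ({b1, b2, b3} : Set Pt), c a = c s ∧ a' ∈ openSegment ℝ a s ∧
          ∃ s1 s2 : Pt, s1 ≠ s2 ∧ ({s, s1, s2} : Set Pt) = ({b1, b2, b3} : Set Pt) ∧
            c s1 = c s2 ∧
            (i ∈ openSegment ℝ s1 s2 ∨ i' ∈ openSegment ℝ s1 s2) := by
  -- basis setup
  have hai : AffineIndependent ℝ ![t1,t2,t3] := affineIndependent_iff_not_collinear_set.2 hT
  have htop : affineSpan ℝ (Set.range ![t1,t2,t3]) = ⊤ := by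
    rw [hai.affineSpan_eq_top_iff_card_eq_finrank_add_one]
    simp [Module.finrank_prod, Module.finrank_self]
  obtain ⟨bb, hbb0, hbb1, hbb2⟩ :
      ∃ bb : AffineBasis (Fin 3) ℝ Pt, bb 0 = t1 ∧ bb 1 = t2 ∧ bb 2 = t3 :=
    ⟨⟨![t1,t2,t3], hai, htop⟩, rfl, rfl, rfl⟩
  set K : Set Pt := convexHull ℝ ({t1, t2, t3} : Set Pt) with hK
  have hrange : Set.range bb = ({t1,t2,t3} : Set Pt) := by
    ext x
    constructor
    · rintro ⟨j, rfl⟩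
      fin_cases j
      · rw [show bb ⟨0, by norm_num⟩ = t1 from hbb0]; simp
      · rw [show bb ⟨1, by norm_num⟩ = t2 from hbb1]; simp
      · rw [show bb ⟨2, by norm_num⟩ = t3 from hbb2]; simp
    · rintro (rfl|rfl|rfl)
      exacts [⟨0, hbb0⟩, ⟨1, hbb1⟩, ⟨2, hbb2⟩]
  have hintC : ∀ x, x ∈ interior K ↔ ∀ j, 0 < bb.coord j x := by
    intro x
    rw [hK, ← hrange, bb.interior_convexHull]
    rfl
  have hKC : ∀ x ∈ K, ∀ j, 0 ≤ bb.coord j x := by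
    intro x hx j
    rw [hK, ← hrange, bb.convexHull_eq_nonneg_coord] at hx
    exact hx j
  have hcv : ∀ j k : Fin 3, bb.coord j (bb k) = if j = k then 1 else 0 :=
    fun j k => bb.coord_apply j k
  have hseg12 : ∀ x, x ∈ openSegment ℝ t1 t2 ↔
      (0 < bb.coord 0 x ∧ 0 < bb.coord 1 x ∧ bb.coord 2 x = 0) := by
    intro x
    constructor
    · rintro ⟨a, b, ha, hb, hab, rfl⟩
      have h : ∀ j, bb.coord j (a • t1 + b • t2) = ![a,b,0] j := by
        intro j
        have h' := coordComb bb (a := a) (b := b) (c := 0) (by linarith) j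
        rw [hbb0, hbb1, hbb2, zero_smul, add_zero] at h'
        exact h'
      have h0 := h 0; have h1 := h 1; have h2 := h 2
      simp only [Matrix.cons_val_zero, Matrix.cons_val_one, Matrix.head_cons,
        Matrix.cons_val_two, Matrix.tail_cons] at h0 h1 h2
      exact ⟨by rw [h0]; exact ha, by rw [h1]; exact hb, h2⟩
    · rintro ⟨h0, h1, h2⟩
      have hx := reprCoord bb x
      rw [hbb0, hbb1, hbb2, h2, zero_smul, add_zero] at hx
      have hsum := sumCoord bb x
      exact ⟨_, _, h0, h1, by linarith, hx.symm⟩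
  have hseg23 : ∀ x, x ∈ openSegment ℝ t2 t3 ↔
      (bb.coord 0 x = 0 ∧ 0 < bb.coord 1 x ∧ 0 < bb.coord 2 x) := by
    intro x
    constructor
    · rintro ⟨a, b, ha, hb, hab, rfl⟩
      have h : ∀ j, bb.coord j (a • t2 + b • t3) = ![0,a,b] j := by
        intro j
        have h' := coordComb bb (a := 0) (b := a) (c := b) (by linarith) j
        rw [hbb0, hbb1, hbb2, zero_smul, zero_add] at h'
        exact h'
      have h0 := h 0; have h1 := h 1; have h2 := h 2
      simp only [Matrix.cons_val_zero, Matrix.cons_val_one, Matrix.head_cons,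
        Matrix.cons_val_two, Matrix.tail_cons] at h0 h1 h2
      exact ⟨h0, by rw [h1]; exact ha, by rw [h2]; exact hb⟩
    · rintro ⟨h0, h1, h2⟩
      have hx := reprCoord bb x
      rw [hbb0, hbb1, hbb2, h0, zero_smul, zero_add] at hx
      have hsum := sumCoord bb x
      exact ⟨_, _, h1, h2, by linarith, hx.symm⟩
  have hseg31 : ∀ x, x ∈ openSegment ℝ t3 t1 ↔
      (0 < bb.coord 0 x ∧ bb.coord 1 x = 0 ∧ 0 < bb.coord 2 x) := by
    intro x
    constructor
    · rintro ⟨a, b, ha, hb, hab, rfl⟩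
      have h : ∀ j, bb.coord j (a • t3 + b • t1) = ![b,0,a] j := by
        intro j
        have h' := coordComb bb (a := b) (b := 0) (c := a) (by linarith) j
        rw [hbb0, hbb1, hbb2, zero_smul, add_zero] at h'
        rw [show b • t1 + a • t3 = a • t3 + b • t1 from add_comm _ _] at h'
        exact h'
      have h0 := h 0; have h1 := h 1; have h2 := h 2
      simp only [Matrix.cons_val_zero, Matrix.cons_val_one, Matrix.head_cons,
        Matrix.cons_val_two, Matrix.tail_cons] at h0 h1 h2
      exact ⟨by rw [h0]; exact hb, h1, by rw [h2]; exact ha⟩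
    · rintro ⟨h0, h1, h2⟩
      have hx := reprCoord bb x
      rw [hbb0, hbb1, hbb2, h1, zero_smul, add_zero] at hx
      have hsum := sumCoord bb x
      refine ⟨_, _, h2, h0, by linarith, ?_⟩
      rw [add_comm]
      exact hx.symm
  have hvtx3 : ∀ b : Pt, bb.coord 0 b = 0 → bb.coord 1 b = 0 → b = t3 := by
    intro b h0 h1
    have hs := sumCoord bb b
    rw [← hbb2]
    apply bb.ext_elem
    intro j
    fin_cases j
    · show bb.coord 0 b = bb.coord 0 (bb 2)
      rw [hcv 0 2]; simpa using h0
    · show bb.coord 1 b = bb.coord 1 (bb 2)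
      rw [hcv 1 2]; simpa using h1
    · show bb.coord 2 b = bb.coord 2 (bb 2)
      rw [hcv 2 2]; simp; linarith
  have hvtx2 : ∀ b : Pt, bb.coord 0 b = 0 → bb.coord 2 b = 0 → b = t2 := by
    intro b h0 h2
    have hs := sumCoord bb b
    rw [← hbb1]
    apply bb.ext_elem
    intro j
    fin_cases j
    · show bb.coord 0 b = bb.coord 0 (bb 1)
      rw [hcv 0 1]; simpa using h0
    · show bb.coord 1 b = bb.coord 1 (bb 1)
      rw [hcv 1 1]; simp; linarith
    · show bb.coord 2 b = bb.coord 2 (bb 1)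
      rw [hcv 2 1]; simpa using h2
  have hvtx1 : ∀ b : Pt, bb.coord 1 b = 0 → bb.coord 2 b = 0 → b = t1 := by
    intro b h1 h2
    have hs := sumCoord bb b
    rw [← hbb0]
    apply bb.ext_elem
    intro j
    fin_cases j
    · show bb.coord 0 b = bb.coord 0 (bb 0)
      rw [hcv 0 0]; simp; linarith
    · show bb.coord 1 b = bb.coord 1 (bb 0)
      rw [hcv 1 0]; simpa using h1
    · show bb.coord 2 b = bb.coord 2 (bb 0)
      rw [hcv 2 0]; simpa using h2
  have htri : ∀ b ∈ B, (∀ j, 0 < bb.coord j b) ∨ b ∈ openSegment ℝ t1 t2 ∨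
      b ∈ openSegment ℝ t2 t3 ∨ b ∈ openSegment ℝ t3 t1 := by
    intro b hb
    have hbK : b ∈ K := (hBsub hb).1
    have hbT : b ∉ ({t1,t2,t3} : Set Pt) := (hBsub hb).2
    have hnn := hKC b hbK
    rcases eq_or_lt_of_le (hnn 0) with h0|h0 <;>
      rcases eq_or_lt_of_le (hnn 1) with h1|h1 <;>
      rcases eq_or_lt_of_le (hnn 2) with h2|h2
    · have hs := sumCoord bb b; linarith
    · exact absurd (hvtx3 b h0.symm h1.symm) (fun h => hbT (by simp [h]))
    · exact absurd (hvtx2 b h0.symm h2.symm) (fun h => hbT (by simp [h]))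
    · exact Or.inr (Or.inr (Or.inl ((hseg23 b).2 ⟨h0.symm, h1, h2⟩)))
    · exact absurd (hvtx1 b h1.symm h2.symm) (fun h => hbT (by simp [h]))
    · exact Or.inr (Or.inr (Or.inr ((hseg31 b).2 ⟨h0, h1.symm, h2⟩)))
    · exact Or.inr (Or.inl ((hseg12 b).2 ⟨h0, h1, h2.symm⟩))
    · exact Or.inl (fun j => by fin_cases j <;> assumption)
  have hv1 : ∀ j, bb.coord j t1 = if j = 0 then 1 else 0 := fun j => by rw [← hbb0, hcv j 0]
  have hv2 : ∀ j, bb.coord j t2 = if j = 1 then 1 else 0 := fun j => by rw [← hbb1, hcv j 1]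
  have hv3 : ∀ j, bb.coord j t3 = if j = 2 then 1 else 0 := fun j => by rw [← hbb2, hcv j 2]
  have ht12 : t1 ≠ t2 := by
    intro h
    have h1 := hv1 0
    rw [h, hv2 0] at h1
    simp at h1
  have ht23 : t2 ≠ t3 := by
    intro h
    have h1 := hv2 1
    rw [h, hv3 1] at h1
    simp at h1
  have ht31 : t3 ≠ t1 := by
    intro h
    have h1 := hv3 2
    rw [h, hv1 2] at h1
    simp at h1
  have hXB : ∀ b ∈ B, b ∈ ({t1,t2,t3} : Finset Pt) ∪ B := fun b hb =>
    Finset.mem_union_right _ hb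
  have hsegint : ∀ u v x : Pt, x ∈ openSegment ℝ u v → (∀ j, 0 ≤ bb.coord j u) →
      (∀ j, 0 ≤ bb.coord j v) → (∀ j, 0 < bb.coord j u ∨ 0 < bb.coord j v) →
      ∀ j, 0 < bb.coord j x := by
    intro u v x hx hu hv huv j
    obtain ⟨θ, hθ0, hθ1, hco⟩ := segCoord bb hx
    rw [hco j]
    rcases huv j with h|h
    · nlinarith [hu j, hv j]
    · nlinarith [hu j, hv j]
  have hBK : ∀ b ∈ B, ∀ j, 0 ≤ bb.coord j b := fun b hb => hKC b (hBsub hb).1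
  have hiC : ∀ j, 0 < bb.coord j i := (hintC i).1 hiint
  have hi'C : ∀ j, 0 < bb.coord j i' := (hintC i').1 hi'int
  have hblk : ∀ u v : Pt, u ∈ B → v ∈ B → u ≠ v → c u = c v →
      (∀ j, 0 < bb.coord j u ∨ 0 < bb.coord j v) →
      ∃ p, (p = i ∨ p = i') ∧ p ∈ openSegment ℝ u v := by
    intro u v hu hv huv hcuv hpos
    obtain ⟨p, hpX, hpseg⟩ := hproper u (hXB u hu) v (hXB v hv) huv hcuv
    have hpint : ∀ j, 0 < bb.coord j p := hsegint u v p hpseg (hBK u hu) (hBK v hv) hpos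
    have hpB : p ∈ B := by
      rcases Finset.mem_union.1 hpX with h|h
      · exfalso
        rcases Finset.mem_insert.1 h with rfl|h
        · have h2 := hpint 1
          rw [hv1 1] at h2
          simp at h2
        · rcases Finset.mem_insert.1 h with rfl|h
          · have h2 := hpint 0
            rw [hv2 0] at h2
            simp at h2
          · rw [Finset.mem_singleton] at h
            subst h
            have h2 := hpint 0
            rw [hv3 0] at h2
            simp at h2
      · exact h
    exact ⟨p, honly p hpB ((hintC p).2 hpint), hpseg⟩
  have hno4 : ∀ p q r s : Pt, p ∈ ({t1,t2,t3} : Finset Pt) ∪ B →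
      q ∈ ({t1,t2,t3} : Finset Pt) ∪ B → r ∈ ({t1,t2,t3} : Finset Pt) ∪ B →
      s ∈ ({t1,t2,t3} : Finset Pt) ∪ B → p ≠ q → p ≠ r → p ≠ s → q ≠ r → q ≠ s → r ≠ s →
      Collinear ℝ ({p,q,r,s} : Set Pt) → False := by
    intro p q r s hp hq hr hs h1 h2 h3' h4 h5 h6 hcol
    have hsub : ({p,q,r,s} : Finset Pt) ⊆ ({t1,t2,t3} : Finset Pt) ∪ B := by
      intro x hx
      simp only [Finset.mem_insert, Finset.mem_singleton] at hx
      rcases hx with rfl|rfl|rfl|rfl <;> assumption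
    have hcard : ({p,q,r,s} : Finset Pt).card = 4 := by
      rw [Finset.card_insert_of_notMem (by simp [h1,h2,h3']),
          Finset.card_insert_of_notMem (by simp [h4,h5]),
          Finset.card_insert_of_notMem (by simp [h6]), Finset.card_singleton]
    have := h3 _ hsub (by rw [show ((({p,q,r,s} : Finset Pt)) : Set Pt) = ({p,q,r,s} : Set Pt) by simp]; exact hcol)
    omega
  obtain ⟨⟨b1, hb1B, hb1s⟩, ⟨b2, hb2B, hb2s⟩, ⟨b3, hb3B, hb3s⟩⟩ := hblocks
  have hp1 := (hseg12 b1).1 hb1s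
  have hp2 := (hseg23 b2).1 hb2s
  have hp3 := (hseg31 b3).1 hb3s
  have hBnotT : ∀ b ∈ B, b ≠ t1 ∧ b ≠ t2 ∧ b ≠ t3 := by
    intro b hb
    have h := (hBsub hb).2
    refine ⟨?_, ?_, ?_⟩ <;> intro hh <;> exact h (by simp [hh])
  have huniq12 : ∀ b ∈ B, b ∈ openSegment ℝ t1 t2 → b = b1 := by
    intro b hb hbs
    by_contra hne
    exact hno4 b b1 t1 t2 (hXB b hb) (hXB b1 hb1B) (by simp) (by simp) hne
      (hBnotT b hb).1 (hBnotT b hb).2.1 (hBnotT b1 hb1B).1 (hBnotT b1 hb1B).2.1 ht12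
      (collinear_insert_insert_of_mem_affineSpan_pair (segLine hbs) (segLine hb1s))
  have huniq23 : ∀ b ∈ B, b ∈ openSegment ℝ t2 t3 → b = b2 := by
    intro b hb hbs
    by_contra hne
    exact hno4 b b2 t2 t3 (hXB b hb) (hXB b2 hb2B) (by simp) (by simp) hne
      (hBnotT b hb).2.1 (hBnotT b hb).2.2 (hBnotT b2 hb2B).2.1 (hBnotT b2 hb2B).2.2 ht23
      (collinear_insert_insert_of_mem_affineSpan_pair (segLine hbs) (segLine hb2s))
  have huniq31 : ∀ b ∈ B, b ∈ openSegment ℝ t3 t1 → b = b3 := by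
    intro b hb hbs
    by_contra hne
    exact hno4 b b3 t3 t1 (hXB b hb) (hXB b3 hb3B) (by simp) (by simp) hne
      (hBnotT b hb).2.2 (hBnotT b hb).1 (hBnotT b3 hb3B).2.2 (hBnotT b3 hb3B).1 ht31
      (collinear_insert_insert_of_mem_affineSpan_pair (segLine hbs) (segLine hb3s))
  have hb12 : b1 ≠ b2 := by
    intro h
    have hx := hp1.1
    rw [h, hp2.1] at hx
    exact lt_irrefl _ hx
  have hb13 : b1 ≠ b3 := by
    intro h
    have hx := hp3.2.2
    rw [← h, hp1.2.2] at hx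
    exact lt_irrefl _ hx
  have hb23 : b2 ≠ b3 := by
    intro h
    have hx := hp3.1
    rw [← h, hp2.1] at hx
    exact lt_irrefl _ hx
  have hb1i : b1 ≠ i := by
    intro h
    have hx := hiC 2
    rw [← h, hp1.2.2] at hx
    exact lt_irrefl _ hx
  have hb2i : b2 ≠ i := by
    intro h
    have hx := hiC 0
    rw [← h, hp2.1] at hx
    exact lt_irrefl _ hx
  have hb3i : b3 ≠ i := by
    intro h
    have hx := hiC 1
    rw [← h, hp3.2.1] at hx
    exact lt_irrefl _ hx
  have hb1i' : b1 ≠ i' := by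
    intro h
    have hx := hi'C 2
    rw [← h, hp1.2.2] at hx
    exact lt_irrefl _ hx
  have hb2i' : b2 ≠ i' := by
    intro h
    have hx := hi'C 0
    rw [← h, hp2.1] at hx
    exact lt_irrefl _ hx
  have hb3i' : b3 ≠ i' := by
    intro h
    have hx := hi'C 1
    rw [← h, hp3.2.1] at hx
    exact lt_irrefl _ hx
  have hmem5 : ∀ q ∈ B, q = b1 ∨ q = b2 ∨ q = b3 ∨ q = i ∨ q = i' := by
    intro q hq
    rcases htri q hq with h|h|h|h
    · rcases honly q hq ((hintC q).2 h) with h'|h'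
      · exact Or.inr (Or.inr (Or.inr (Or.inl h')))
      · exact Or.inr (Or.inr (Or.inr (Or.inr h')))
    · exact Or.inl (huniq12 q hq h)
    · exact Or.inr (Or.inl (huniq23 q hq h))
    · exact Or.inr (Or.inr (Or.inl (huniq31 q hq h)))
  have hBeq : B = ({b1, b2, b3, i, i'} : Finset Pt) := by
    apply Finset.ext
    intro q
    constructor
    · intro hq
      simp only [Finset.mem_insert, Finset.mem_singleton]
      exact hmem5 q hq
    · intro hq
      simp only [Finset.mem_insert, Finset.mem_singleton] at hq
      rcases hq with rfl|rfl|rfl|rfl|rfl <;> assumption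
  have hBcard : B.card = 5 := by
    rw [hBeq]
    rw [Finset.card_insert_of_notMem (by simp [hb12, hb13, hb1i, hb1i']),
        Finset.card_insert_of_notMem (by simp [hb23, hb2i, hb2i']),
        Finset.card_insert_of_notMem (by simp [hb3i, hb3i']),
        Finset.card_insert_of_notMem (by simp [hii']), Finset.card_singleton]
  -- c i ≠ c i'
  have hcii' : c i ≠ c i' := by
    intro hc
    obtain ⟨p, hp, hpseg⟩ := hblk i i' hi hi' hii' hc (fun j => Or.inl (hiC j))
    rcases hp with rfl|rfl
    · rw [left_mem_openSegment_iff] at hpseg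
      exact hii' hpseg
    · rw [right_mem_openSegment_iff] at hpseg
      exact hii' hpseg
  have hEd : ∀ x : Pt, (x = b1 ∨ x = b2 ∨ x = b3) → x ∈ B := by
    rintro x (rfl|rfl|rfl) <;> assumption
  have hEdz : ∀ x : Pt, (x = b1 ∨ x = b2 ∨ x = b3) → ∃ j, bb.coord j x = 0 := by
    rintro x (rfl|rfl|rfl)
    exacts [⟨2, hp1.2.2⟩, ⟨0, hp2.1⟩, ⟨1, hp3.2.1⟩]
  have hEdpos : ∀ u v : Pt, (u = b1 ∨ u = b2 ∨ u = b3) → (v = b1 ∨ v = b2 ∨ v = b3) →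
      u ≠ v → ∀ j, 0 < bb.coord j u ∨ 0 < bb.coord j v := by
    rintro u v (rfl|rfl|rfl) (rfl|rfl|rfl) huv j
    · exact absurd rfl huv
    · fin_cases j
      exacts [Or.inl hp1.1, Or.inl hp1.2.1, Or.inr hp2.2.2]
    · fin_cases j
      exacts [Or.inl hp1.1, Or.inl hp1.2.1, Or.inr hp3.2.2]
    · fin_cases j
      exacts [Or.inr hp1.1, Or.inl hp2.2.1, Or.inl hp2.2.2]
    · exact absurd rfl huv
    · fin_cases j
      exacts [Or.inr hp3.1, Or.inl hp2.2.1, Or.inl hp2.2.2]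
    · fin_cases j
      exacts [Or.inl hp3.1, Or.inr hp1.2.1, Or.inl hp3.2.2]
    · fin_cases j
      exacts [Or.inl hp3.1, Or.inr hp2.2.1, Or.inl hp3.2.2]
    · exact absurd rfl huv
  have hneBI : ∀ x a : Pt, (x = b1 ∨ x = b2 ∨ x = b3) → (a = i ∨ a = i') → x ≠ a := by
    rintro x a (rfl|rfl|rfl) (rfl|rfl) <;> assumption
  have hwB : ∀ w : Pt, (w = i ∨ w = i') → w ∈ B := by
    rintro w (rfl|rfl) <;> assumption
  have hwne : ∀ w x : Pt, (w = i ∨ w = i') → (x = b1 ∨ x = b2 ∨ x = b3) → w ≠ x :=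
    fun w x hw hx => (hneBI x w hx hw).symm
  have hshare : ∀ a a' s : Pt, ((a = i ∧ a' = i') ∨ (a = i' ∧ a' = i)) →
      (s = b1 ∨ s = b2 ∨ s = b3) → c a = c s → a' ∈ openSegment ℝ a s := by
    intro a a' s ha hs hc'
    have haB : a ∈ B := by rcases ha with ⟨rfl,_⟩|⟨rfl,_⟩ <;> assumption
    have haC : ∀ j, 0 < bb.coord j a := by
      rcases ha with ⟨rfl,_⟩|⟨rfl,_⟩
      exacts [hiC, hi'C]
    have hasne : a ≠ s := by
      rcases ha with ⟨rfl,h2⟩|⟨rfl,h2⟩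
      exacts [(hneBI s a hs (Or.inl rfl)).symm, (hneBI s a hs (Or.inr rfl)).symm]
    obtain ⟨p, hp, hpseg⟩ := hblk a s haB (hEd s hs) hasne hc' (fun j => Or.inl (haC j))
    have hpa : p ≠ a := by
      intro h
      rw [h, left_mem_openSegment_iff] at hpseg
      exact hasne hpseg
    have hp' : p = a' := by
      rcases ha with ⟨rfl, rfl⟩|⟨rfl, rfl⟩ <;> rcases hp with rfl|rfl <;>
        first | exact absurd rfl hpa | rfl
    rw [← hp']
    exact hpseg
  have hcontra2 : ∀ w x y z : Pt, w ∈ B → x ∈ B → y ∈ B → z ∈ B → w ≠ x → x ≠ y → x ≠ z →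
      y ≠ z → w ≠ y → w ≠ z →
      w ∈ openSegment ℝ x y → w ∈ openSegment ℝ x z → False := by
    intro w x y z hw hx hy hz hwx hxy hxz hyz hwy hwz h1 h2
    exact hno4 z w x y (hXB _ hz) (hXB _ hw) (hXB _ hx) (hXB _ hy)
      hwz.symm hxz.symm hyz.symm hwx hwy hxy (col4 h1 h2 hwx)
  obtain ⟨k1, k2, k3, hk⟩ := hcolors
  have hkey3 : ¬ (c b1 = c b2 ∧ c b1 = c b3) := by
    rintro ⟨h12, h13⟩
    obtain ⟨q12, hq12, hsg12⟩ := hblk b1 b2 hb1B hb2B hb12 h12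
      (hEdpos b1 b2 (Or.inl rfl) (Or.inr (Or.inl rfl)) hb12)
    obtain ⟨q13, hq13, hsg13⟩ := hblk b1 b3 hb1B hb3B hb13 h13
      (hEdpos b1 b3 (Or.inl rfl) (Or.inr (Or.inr rfl)) hb13)
    obtain ⟨q23, hq23, hsg23⟩ := hblk b2 b3 hb2B hb3B hb23 (h12.symm.trans h13)
      (hEdpos b2 b3 (Or.inr (Or.inl rfl)) (Or.inr (Or.inr rfl)) hb23)
    by_cases hA : q12 = q13
    · exact hcontra2 q12 b1 b2 b3 (hwB _ hq12) hb1B hb2B hb3B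
        (hwne _ _ hq12 (Or.inl rfl)) hb12 hb13 hb23
        (hwne _ _ hq12 (Or.inr (Or.inl rfl))) (hwne _ _ hq12 (Or.inr (Or.inr rfl)))
        hsg12 (by rw [hA]; exact hsg13)
    · have hBB : q23 = q12 ∨ q23 = q13 := by
        rcases hq12 with rfl|rfl <;> rcases hq13 with rfl|rfl <;> rcases hq23 with h|h <;> tauto
      rcases hBB with h|h
      · exact hcontra2 q12 b2 b1 b3 (hwB _ hq12) hb2B hb1B hb3B
          (hwne _ _ hq12 (Or.inr (Or.inl rfl))) hb12.symm hb23 hb13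
          (hwne _ _ hq12 (Or.inl rfl)) (hwne _ _ hq12 (Or.inr (Or.inr rfl)))
          (by rw [openSegment_symm]; exact hsg12) (by rw [← h]; exact hsg23)
      · exact hcontra2 q13 b3 b1 b2 (hwB _ hq13) hb3B hb1B hb2B
          (hwne _ _ hq13 (Or.inr (Or.inr rfl))) hb13.symm hb23.symm hb12
          (hwne _ _ hq13 (Or.inl rfl)) (hwne _ _ hq13 (Or.inr (Or.inl rfl)))
          (by rw [openSegment_symm]; exact hsg13) (by rw [← h, openSegment_symm]; exact hsg23)
  have hnest : ∀ s s' : Pt, (s = b1 ∨ s = b2 ∨ s = b3) → (s' = b1 ∨ s' = b2 ∨ s' = b3) →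
      c i = c s → c i' = c s' → False := by
    intro s s' hs hs' hcs hcs'
    have h1 : i' ∈ openSegment ℝ i s := hshare i i' s (Or.inl ⟨rfl, rfl⟩) hs hcs
    have h2 : i ∈ openSegment ℝ i' s' := hshare i' i s' (Or.inr ⟨rfl, rfl⟩) hs' hcs'
    by_cases hss : s = s'
    · subst hss
      obtain ⟨θ, hθ0, hθ1, hc1⟩ := segCoord bb h1
      obtain ⟨μ, hμ0, hμ1, hc2⟩ := segCoord bb h2
      obtain ⟨j, hj⟩ := hEdz s hs
      have e1 := hc1 j
      have e2 := hc2 j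
      rw [hj, mul_zero, add_zero] at e1 e2
      nlinarith [hiC j, hi'C j, mul_pos hθ0 hμ0]
    · have c1 : Collinear ℝ ({i', i, s} : Set Pt) :=
        collinear_insert_of_mem_affineSpan_pair (segLine h1)
      have c2 : Collinear ℝ ({i, i', s'} : Set Pt) :=
        collinear_insert_of_mem_affineSpan_pair (segLine h2)
      have c3 : Collinear ℝ ({s', i', i, s} : Set Pt) :=
        (c1.collinear_insert_iff_of_ne (p₁ := s') (Set.mem_insert _ _)
          (Set.mem_insert_of_mem _ (Set.mem_insert _ _)) hii'.symm).2
          (c2.subset (by intro x hx; simp at hx ⊢; tauto))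
      exact hno4 s' i' i s (hXB _ (hEd s' hs')) (hXB _ hi') (hXB _ hi) (hXB _ (hEd s hs))
        (hneBI s' i' hs' (Or.inr rfl)) (hneBI s' i hs' (Or.inl rfl))
        (fun h => hss h.symm) hii'.symm (hneBI s i' hs (Or.inr rfl)).symm
        (hneBI s i hs (Or.inl rfl)).symm c3
  have hkey2 : c b1 ≠ c b2 → c b1 ≠ c b3 → c b2 = c b3 := by
    intro h12 h13
    by_contra h23
    have hci : c i = c b1 ∨ c i = c b2 ∨ c i = c b3 :=
      colorlogic1 (c b1) (c b2) (c b3) (c i) k1 k2 k3 (hk b1 hb1B).1 (hk b2 hb2B).1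
        (hk b3 hb3B).1 (hk i hi).1 h12 h13 h23
    have hci' : c i' = c b1 ∨ c i' = c b2 ∨ c i' = c b3 :=
      colorlogic1 (c b1) (c b2) (c b3) (c i') k1 k2 k3 (hk b1 hb1B).1 (hk b2 hb2B).1
        (hk b3 hb3B).1 (hk i' hi').1 h12 h13 h23
    have e1 : b1 = b1 ∨ b1 = b2 ∨ b1 = b3 := Or.inl rfl
    have e2 : b2 = b1 ∨ b2 = b2 ∨ b2 = b3 := Or.inr (Or.inl rfl)
    have e3 : b3 = b1 ∨ b3 = b2 ∨ b3 = b3 := Or.inr (Or.inr rfl)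
    rcases hci with h|h|h <;> rcases hci' with h'|h'|h'
    exacts [hnest b1 b1 e1 e1 h h', hnest b1 b2 e1 e2 h h', hnest b1 b3 e1 e3 h h',
      hnest b2 b1 e2 e1 h h', hnest b2 b2 e2 e2 h h', hnest b2 b3 e2 e3 h h',
      hnest b3 b1 e3 e1 h h', hnest b3 b2 e3 e2 h h', hnest b3 b3 e3 e3 h h']
  have hfinal : ∀ s s1 s2 : Pt, (s = b1 ∨ s = b2 ∨ s = b3) → (s1 = b1 ∨ s1 = b2 ∨ s1 = b3) →
      (s2 = b1 ∨ s2 = b2 ∨ s2 = b3) → ({s, s1, s2} : Set Pt) = ({b1, b2, b3} : Set Pt) →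
      s ≠ s1 → s ≠ s2 → s1 ≠ s2 → c s1 = c s2 → c s ≠ c s1 →
      (∃ a a' : Pt, ({a, a'} : Set Pt) = ({i, i'} : Set Pt) ∧
        ∃ sx ∈ ({b1, b2, b3} : Set Pt), c a = c sx ∧ a' ∈ openSegment ℝ a sx ∧
          ∃ u1 u2 : Pt, u1 ≠ u2 ∧ ({sx, u1, u2} : Set Pt) = ({b1, b2, b3} : Set Pt) ∧
            c u1 = c u2 ∧
            (i ∈ openSegment ℝ u1 u2 ∨ i' ∈ openSegment ℝ u1 u2)) := by
    intro s s1 s2 hs hs1 hs2 hss123 hss1 hss2 hs12 hc12 hcs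
    have hCci : c i = c s1 → False := by
      intro hca
      have e1 := hshare i i' s1 (Or.inl ⟨rfl, rfl⟩) hs1 hca
      have e2 := hshare i i' s2 (Or.inl ⟨rfl, rfl⟩) hs2 (hca.trans hc12)
      exact hcontra2 i' i s1 s2 hi' hi (hEd _ hs1) (hEd _ hs2) hii'.symm
        (hneBI s1 i hs1 (Or.inl rfl)).symm (hneBI s2 i hs2 (Or.inl rfl)).symm hs12
        (hneBI s1 i' hs1 (Or.inr rfl)).symm (hneBI s2 i' hs2 (Or.inr rfl)).symm e1 e2
    have hCci' : c i' = c s1 → False := by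
      intro hca
      have e1 := hshare i' i s1 (Or.inr ⟨rfl, rfl⟩) hs1 hca
      have e2 := hshare i' i s2 (Or.inr ⟨rfl, rfl⟩) hs2 (hca.trans hc12)
      exact hcontra2 i i' s1 s2 hi hi' (hEd _ hs1) (hEd _ hs2) hii'
        (hneBI s1 i' hs1 (Or.inr rfl)).symm (hneBI s2 i' hs2 (Or.inr rfl)).symm hs12
        (hneBI s1 i hs1 (Or.inl rfl)).symm (hneBI s2 i hs2 (Or.inl rfl)).symm e1 e2
    have ha : c i = c s ∨ c i' = c s := by
      by_contra hno
      push_neg at hno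
      exact colorlogic2 (c s1) (c s) (c i) (c i') k1 k2 k3 (hk s1 (hEd s1 hs1)).1
        (hk s (hEd s hs)).1 (hk i hi).1 (hk i' hi').1 hcs hcii'
        hCci hno.1 hCci' hno.2
    obtain ⟨p, hp, hpseg⟩ := hblk s1 s2 (hEd _ hs1) (hEd _ hs2) hs12 hc12
      (hEdpos _ _ hs1 hs2 hs12)
    have hsmem : s ∈ ({b1, b2, b3} : Set Pt) := by
      rcases hs with rfl|rfl|rfl
      exacts [Set.mem_insert _ _, Set.mem_insert_of_mem _ (Set.mem_insert _ _),
        Set.mem_insert_of_mem _ (Set.mem_insert_of_mem _ rfl)]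
    have hdisj : i ∈ openSegment ℝ s1 s2 ∨ i' ∈ openSegment ℝ s1 s2 := by
      rcases hp with rfl|rfl
      exacts [Or.inl hpseg, Or.inr hpseg]
    rcases ha with hca|hca
    · exact ⟨i, i', rfl, s, hsmem, hca, hshare i i' s (Or.inl ⟨rfl, rfl⟩) hs hca,
        s1, s2, hs12, hss123, hc12, hdisj⟩
    · refine ⟨i', i, ?_, s, hsmem, hca, hshare i' i s (Or.inr ⟨rfl, rfl⟩) hs hca,
        s1, s2, hs12, hss123, hc12, hdisj⟩
      exact Set.pair_comm i' i
  refine ⟨hBcard, hcii', b1, b2, b3, hBeq, hb1s, hb2s, hb3s, ?_⟩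
  by_cases h12 : c b1 = c b2
  · exact hfinal b3 b1 b2 (Or.inr (Or.inr rfl)) (Or.inl rfl) (Or.inr (Or.inl rfl))
      (by ext x; simp; tauto)
      hb13.symm hb23.symm hb12 h12 (fun h => hkey3 ⟨h12, h.symm⟩)
  · by_cases h13 : c b1 = c b3
    · exact hfinal b2 b1 b3 (Or.inr (Or.inl rfl)) (Or.inl rfl) (Or.inr (Or.inr rfl))
        (by ext x; simp; tauto)
        hb12.symm hb23 hb13 h13 (fun h => h12 h.symm)
    · exact hfinal b1 b2 b3 (Or.inl rfl) (Or.inr (Or.inl rfl)) (Or.inr (Or.inr rfl))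
        rfl hb12 hb13 hb23 (hkey2 h12 h13) h12
end
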